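/- arXiv:2003.00550 — 7 statements merged into one kernel-verified Lean document; each statement's English description precedes it below -/
import Mathlib

section
/- Let F be a function from finite multisets of non-negative integers to ℚ satisfying: (initial condition) F(∅) = 1; (divisor equation) for every finite multiset s of non-negative integers, F(0 :: s) = (1 + Σs)·F(s), where Σs denotes the sum of the elements of s and 0 :: s denotes s with one copy of 0 added; and (topological recursion) for every n ≥ 2 and all a_1,…,a_n ∈ ℕ, F(a_1+1, a_2, …, a_n) = ∑_{(I,J)} (1 + ∑_{j∈J} a_j) · F((a_i)_{i∈I}) · F((a_j)_{j∈J}), the sum being over all pairs (I,J) of disjoint sets with I ∪ J = {1,…,n}, 1 ∈ I and n ∈ J. Then for every n ≥ 0 and all a_1,…,a_n ∈ ℕ, F(a_1,…,a_n) = (1 + ∑_{i=1}^n a_i)^{n−2} / ∏_{i=1}^n a_i!, where the power is taken in ℚ with integer exponent n−2 (possibly negative). -/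
/-!
Induct on the number of insertions. An insertion `τ_0` is removed by the divisor equation,
which the closed form satisfies too. Otherwise the topological recursion, applied at an
insertion `a_1 = b_1 + 1 > 0`, expresses `F` through values with fewer insertions; after
substituting the closed form it becomes the Abel–Hurwitz identity
`∑_{T ⊆ K} (x + w_T)^(|T|-1) (y + w_{K∖T})^|K∖T| = (x + y + w_K)^|K| / x`
with `x = 1 + b_1`, `y = 1 + a_n` and `K = {2, …, n-1}`. That identity is a polynomial identity
in `y`: by induction on `K` both sides have the same derivative, and both vanish at
`y = -(x + w_K)`, the left side because it is then an `|K|`-fold finite difference of a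
polynomial of degree `|K| - 1`. Singletons `{k + 1}` go through the pair `{k + 1, 0}`.
-/

open Polynomial Finset

section FiniteDifference

variable {R : Type*} [CommRing R] {ι : Type*} [DecidableEq ι]

theorem Polynomial.sum_powerset_neg_one_pow_mul_eval_add_sum_eq_zero (w : ι → R)
    (K : Finset ι) {P : R[X]} (hP : P.degree < K.card) (x : R) :
    ∑ T ∈ K.powerset, (-1) ^ T.card * P.eval (x + ∑ i ∈ T, w i) = 0 := by
  induction K using Finset.induction_on generalizing P x with
  | empty => simp_all [Nat.WithBot.lt_zero_iff]
  | insert a K ha ih =>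
    by_cases hP0 : P = 0
    · simp [hP0]
    have hQ : (taylor (w a) P - P).degree < K.card := by
      have hlt := degree_sub_lt_left (degree_taylor P (w a)) (by rwa [Ne, taylor_eq_zero])
        (leadingCoeff_taylor _ _)
      rw [degree_taylor] at hlt
      rw [degree_eq_natDegree hP0, card_insert_of_notMem ha, Nat.cast_lt] at hP
      exact hlt.trans_le (degree_le_of_natDegree_le (Nat.lt_succ_iff.mp hP))
    have hshift : ∀ T ∈ K.powerset, (-1) ^ (insert a T).card * P.eval (x + ∑ i ∈ insert a T, w i)
        = -((-1) ^ T.card * P.eval (x + ∑ i ∈ T, w i + w a)) := by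
      intro T hT
      have haT : a ∉ T := fun h => ha (mem_powerset.mp hT h)
      rw [card_insert_of_notMem haT, sum_insert haT, pow_succ]
      ring_nf
    rw [sum_powerset_insert ha, sum_congr rfl hshift, sum_neg_distrib, ← sub_eq_add_neg,
      ← sum_sub_distrib, ← neg_eq_zero, ← ih hQ x, ← sum_neg_distrib]
    refine sum_congr rfl fun T _ => ?_
    rw [eval_sub, taylor_eval]
    ring

end FiniteDifference

theorem Polynomial.eq_of_derivative_eq_of_eval_eq {R : Type*} [CommRing R] [IsDomain R]
    [CharZero R] {p q : R[X]} (h : derivative p = derivative q) {y : R}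
    (hy : p.eval y = q.eval y) : p = q := by
  have hc : p - q = C ((p - q).coeff 0) :=
    eq_C_of_derivative_eq_zero (by rw [derivative_sub, h, sub_self])
  have h0 : (p - q).coeff 0 = 0 := by
    simpa [eval_sub, hy] using (congrArg (eval y) hc).symm
  rw [h0, C_0] at hc
  exact sub_eq_zero.mp hc

section Abel

variable {R : Type*} [Field R] {ι : Type*} [DecidableEq ι]

theorem zpow_sub_one_mul_pow_sub {a : R} {t n : ℕ} (htn : t ≤ n) (hn : 0 < n)
    (ha : t = 0 → a ≠ 0) : a ^ ((t : ℤ) - 1) * a ^ (n - t) = a ^ (n - 1) := by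
  obtain _ | t := t
  · obtain ⟨n, rfl⟩ := Nat.exists_eq_add_of_lt hn
    rw [Nat.cast_zero, zero_sub, zpow_neg_one, Nat.sub_zero, zero_add, pow_succ',
      inv_mul_cancel_left₀ (ha rfl), Nat.add_sub_cancel]
  · rw [Nat.cast_succ, add_sub_cancel_right, zpow_natCast, ← pow_add]
    congr 1
    omega

theorem Finset.sdiff_eq_insert_erase_sdiff {K T : Finset ι} {e : ι} (he : e ∈ K) (heT : e ∉ T) :
    K \ T = insert e (K.erase e \ T) := by
  rw [← insert_sdiff_of_notMem _ heT, insert_erase he]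

/-- The left-hand side of Abel's identity as a polynomial in `y`. -/
noncomputable def abelPoly (x : R) (w : ι → R) (K : Finset ι) : R[X] :=
  ∑ T ∈ K.powerset,
    C ((x + ∑ i ∈ T, w i) ^ ((T.card : ℤ) - 1)) * (X + C (∑ i ∈ K \ T, w i)) ^ (K \ T).card

variable (x : R) (w : ι → R)

theorem eval_abelPoly (K : Finset ι) (y : R) :
    (abelPoly x w K).eval y = ∑ T ∈ K.powerset,
      (x + ∑ i ∈ T, w i) ^ ((T.card : ℤ) - 1) * (y + ∑ i ∈ K \ T, w i) ^ (K \ T).card := by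
  simp [abelPoly, eval_finsetSum]

theorem eval_derivative_abelPoly (K : Finset ι) (y : R) :
    (derivative (abelPoly x w K)).eval y = ∑ e ∈ K, (abelPoly x w (K.erase e)).eval (y + w e) := by
  set c : Finset ι → R := fun T => (x + ∑ i ∈ T, w i) ^ ((T.card : ℤ) - 1)
  calc (derivative (abelPoly x w K)).eval y
      = ∑ T ∈ K.powerset, ∑ _e ∈ K \ T, c T * (y + ∑ i ∈ K \ T, w i) ^ ((K \ T).card - 1) := by
        simp [abelPoly, eval_finsetSum, derivative_pow, c, mul_comm, mul_left_comm]
    _ = ∑ e ∈ K, ∑ T ∈ (K.erase e).powerset,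
          c T * (y + ∑ i ∈ K \ T, w i) ^ ((K \ T).card - 1) := by
        refine sum_comm' fun T e => ?_
        simp only [mem_powerset, mem_sdiff, subset_erase]
        tauto
    _ = ∑ e ∈ K, (abelPoly x w (K.erase e)).eval (y + w e) := by
        refine sum_congr rfl fun e he => ?_
        rw [eval_abelPoly]
        refine sum_congr rfl fun T hT => ?_
        have heT : e ∉ T := fun h => (mem_erase.mp (mem_powerset.mp hT h)).1 rfl
        have heK : e ∉ K.erase e \ T := fun h => (mem_erase.mp (mem_sdiff.mp h).1).1 rfl
        rw [sdiff_eq_insert_erase_sdiff he heT, sum_insert heK, card_insert_of_notMem heK,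
          Nat.add_sub_cancel, add_assoc]

variable {x}

theorem eval_abelPoly_neg_eq_zero (hx : x ≠ 0) {K : Finset ι} (hK : K.Nonempty) :
    (abelPoly x w K).eval (-(x + ∑ i ∈ K, w i)) = 0 := by
  have hterm : ∀ T ∈ K.powerset, (x + ∑ i ∈ T, w i) ^ ((T.card : ℤ) - 1) *
      (-(x + ∑ i ∈ K, w i) + ∑ i ∈ K \ T, w i) ^ (K \ T).card
      = (-1) ^ K.card * ((-1) ^ T.card * (X ^ (K.card - 1) : R[X]).eval (x + ∑ i ∈ T, w i)) := by
    intro T hT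
    have hTK := mem_powerset.mp hT
    have hsign : ((-1 : R) ^ (K \ T).card) = (-1) ^ K.card * (-1) ^ T.card := by
      rw [← card_sdiff_add_card_eq_card hTK, pow_add, mul_assoc, ← pow_add, ← two_mul,
        pow_mul, neg_one_sq, one_pow, mul_one]
    rw [← sum_sdiff hTK, show -(x + (∑ i ∈ K \ T, w i + ∑ i ∈ T, w i)) + ∑ i ∈ K \ T, w i
      = -(x + ∑ i ∈ T, w i) by ring, neg_pow, hsign, card_sdiff_of_subset hTK, eval_pow, eval_X]
    rw [mul_left_comm, zpow_sub_one_mul_pow_sub (card_le_card hTK) hK.card_pos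
      (fun hT0 => by rwa [card_eq_zero.mp hT0, sum_empty, add_zero]), mul_assoc]
  rw [eval_abelPoly, sum_congr rfl hterm, ← mul_sum,
    sum_powerset_neg_one_pow_mul_eval_add_sum_eq_zero, mul_zero]
  rw [degree_X_pow, Nat.cast_lt]
  exact Nat.sub_lt hK.card_pos one_pos

theorem abelPoly_eq [CharZero R] (hx : x ≠ 0) (K : Finset ι) :
    abelPoly x w K = C x⁻¹ * (X + C (x + ∑ i ∈ K, w i)) ^ K.card := by
  induction K using Finset.strongInduction with
  | H K ih =>
  refine eq_of_derivative_eq_of_eval_eq (Polynomial.funext fun y => ?_)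
    (y := -(x + ∑ i ∈ K, w i)) ?_
  · rw [eval_derivative_abelPoly]
    calc ∑ e ∈ K, (abelPoly x w (K.erase e)).eval (y + w e)
        = ∑ _e ∈ K, x⁻¹ * (y + (x + ∑ i ∈ K, w i)) ^ (K.card - 1) := by
          refine sum_congr rfl fun e he => ?_
          rw [ih _ (erase_ssubset he), ← add_sum_erase K w he, card_erase_of_mem he]
          simp only [eval_mul, eval_C, eval_pow, eval_add, eval_X]
          ring
      _ = _ := by
          rw [sum_const, nsmul_eq_mul, derivative_C_mul, derivative_X_add_C_pow]
          simp only [eval_mul, eval_C, eval_pow, eval_add, eval_X]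
          ring
  · rcases K.eq_empty_or_nonempty with rfl | hK
    · simp [abelPoly]
    · rw [eval_abelPoly_neg_eq_zero w hx hK]
      simp only [eval_mul, eval_C, eval_pow, eval_add, eval_X, neg_add_cancel,
        zero_pow hK.card_pos.ne', mul_zero]

theorem sum_powerset_abel [CharZero R] (hx : x ≠ 0) (K : Finset ι) (y : R) :
    ∑ T ∈ K.powerset,
      (x + ∑ i ∈ T, w i) ^ ((T.card : ℤ) - 1) * (y + ∑ i ∈ K \ T, w i) ^ (K \ T).card
      = (x + y + ∑ i ∈ K, w i) ^ K.card / x := by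
  rw [← eval_abelPoly, abelPoly_eq w hx]
  simp only [eval_mul, eval_C, eval_pow, eval_add, eval_X]
  ring

end Abel

section Reindex

variable {ι : Type*} [Fintype ι] [DecidableEq ι] {p q : ι}

theorem Finset.sum_filter_mem_and_notMem_eq_sum_powerset {M : Type*} [AddCommMonoid M]
    (hpq : p ≠ q) (f : Finset ι → M) :
    ∑ I ∈ univ.filter (fun I => p ∈ I ∧ q ∉ I), f I
      = ∑ T ∈ ((univ.erase p).erase q).powerset, f (insert p T) := by
  refine sum_nbij' (fun I => I.erase p) (insert p) ?_ ?_ ?_ ?_ ?_ <;>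
    simp only [mem_filter, mem_powerset, mem_univ, true_and]
  · intro I hI i hi
    simp only [mem_erase] at hi ⊢
    exact ⟨fun h => hI.2 (h ▸ hi.2), hi.1, mem_univ i⟩
  · intro T hT
    refine ⟨mem_insert_self p T, fun h => ?_⟩
    rcases mem_insert.mp h with h | h
    · exact hpq h.symm
    · simpa using hT h
  · intro I hI
    exact insert_erase hI.1
  · intro T hT
    exact erase_insert fun h => by simpa using hT h
  · intro I hI
    rw [insert_erase hI.1]

theorem Finset.compl_insert_eq_insert_sdiff (hpq : p ≠ q) {T : Finset ι}
    (hT : T ⊆ (univ.erase p).erase q) :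
    (insert p T)ᶜ = insert q ((univ.erase p).erase q \ T) := by
  ext i
  have := @hT i
  simp only [mem_compl, mem_insert, mem_sdiff, mem_erase, mem_univ, and_true] at this ⊢
  by_cases hip : i = p <;> by_cases hiq : i = q <;> simp_all

end Reindex

noncomputable def closedForm (s : Multiset ℕ) : ℚ :=
  (1 + (s.sum : ℚ)) ^ ((Multiset.card s : ℤ) - 2) / ((s.map Nat.factorial).prod : ℚ)

theorem closedForm_map {ι : Type*} (I : Finset ι) (b : ι → ℕ) :
    closedForm (I.val.map b) =
      (1 + ∑ i ∈ I, (b i : ℚ)) ^ ((I.card : ℤ) - 2) / ∏ i ∈ I, ((b i).factorial : ℚ) := by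
  simp [closedForm, Multiset.map_map]

theorem closedForm_cons_zero (s : Multiset ℕ) :
    closedForm (0 ::ₘ s) = (1 + (s.sum : ℚ)) * closedForm s := by
  have hpos : (1 + (s.sum : ℚ)) ≠ 0 := by positivity
  rw [closedForm, closedForm, Multiset.sum_cons, Multiset.card_cons, Multiset.map_cons,
    Multiset.prod_cons, Nat.factorial_zero, one_mul, mul_div_assoc', ← zpow_one_add₀ hpos]
  push_cast
  ring_nf

theorem closedForm_trr_term {ι : Type*} [Fintype ι] [DecidableEq ι] {p q : ι} (hpq : p ≠ q)
    (b : ι → ℕ) {T : Finset ι} (hT : T ⊆ (univ.erase p).erase q) :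
    (1 + ∑ j ∈ (insert p T)ᶜ, (b j : ℚ)) * closedForm ((insert p T).val.map b) *
        closedForm ((insert p T)ᶜ.val.map b) =
      (1 + (b p : ℚ) + ∑ i ∈ T, (b i : ℚ)) ^ ((T.card : ℤ) - 1) *
        (1 + (b q : ℚ) + ∑ i ∈ (univ.erase p).erase q \ T, (b i : ℚ)) ^
          ((univ.erase p).erase q \ T).card / ∏ i, ((b i).factorial : ℚ) := by
  set K := (univ.erase p).erase q
  have hpT : p ∉ T := fun h => by simpa [K] using hT h
  have hqKT : q ∉ K \ T := fun h => by simp [K] at h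
  have hprod : (∏ i ∈ insert p T, ((b i).factorial : ℚ)) *
      ∏ i ∈ insert q (K \ T), ((b i).factorial : ℚ) = ∏ i, ((b i).factorial : ℚ) := by
    rw [← compl_insert_eq_insert_sdiff hpq hT, prod_mul_prod_compl]
  set u := 1 + (b p : ℚ) + ∑ i ∈ T, (b i : ℚ)
  set v := 1 + (b q : ℚ) + ∑ i ∈ K \ T, (b i : ℚ)
  have hv : v ≠ 0 := by positivity
  have hvpow : v * v ^ (((K \ T).card + 1 : ℕ) - 2 : ℤ) = v ^ (K \ T).card := by
    rw [← zpow_one_add₀ hv, ← zpow_natCast]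
    congr 1
    push_cast
    ring
  rw [compl_insert_eq_insert_sdiff hpq hT, closedForm_map, closedForm_map,
    sum_insert hpT, card_insert_of_notMem hpT, sum_insert hqKT,
    card_insert_of_notMem hqKT, ← add_assoc, ← add_assoc, ← hprod,
    show ((T.card + 1 : ℕ) - 2 : ℤ) = (T.card : ℤ) - 1 by push_cast; ring]
  calc v * (u ^ ((T.card : ℤ) - 1) / ∏ i ∈ insert p T, ((b i).factorial : ℚ)) *
        (v ^ (((K \ T).card + 1 : ℕ) - 2 : ℤ) / ∏ i ∈ insert q (K \ T), ((b i).factorial : ℚ))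
      = u ^ ((T.card : ℤ) - 1) * (v * v ^ (((K \ T).card + 1 : ℕ) - 2 : ℤ)) /
          ((∏ i ∈ insert p T, ((b i).factorial : ℚ)) *
            ∏ i ∈ insert q (K \ T), ((b i).factorial : ℚ)) := by ring
    _ = _ := by rw [hvpow]

theorem sum_trr_closedForm {ι : Type*} [Fintype ι] [DecidableEq ι] {p q : ι} (hpq : p ≠ q)
    (b : ι → ℕ) :
    ∑ I ∈ univ.filter (fun I => p ∈ I ∧ q ∉ I),
        (1 + ∑ j ∈ Iᶜ, (b j : ℚ)) * closedForm (I.val.map b) * closedForm (Iᶜ.val.map b) =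
      closedForm ((b p + 1) ::ₘ (univ.erase p).val.map b) := by
  have hx : 1 + (b p : ℚ) ≠ 0 := by positivity
  have hqp : q ∈ univ.erase p := mem_erase.mpr ⟨hpq.symm, mem_univ q⟩
  have hfact : ((b p + 1).factorial : ℚ) * ∏ i ∈ univ.erase p, ((b i).factorial : ℚ) =
      (1 + b p) * ∏ i, ((b i).factorial : ℚ) := by
    rw [← mul_prod_erase _ _ (mem_univ p), Nat.factorial_succ]
    push_cast
    ring
  rw [sum_filter_mem_and_notMem_eq_sum_powerset hpq,
    sum_congr rfl fun T hT => closedForm_trr_term hpq b (mem_powerset.mp hT),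
    ← sum_div, sum_powerset_abel _ hx, closedForm, Multiset.sum_cons, Multiset.card_cons,
    Multiset.map_cons, Multiset.prod_cons, Multiset.map_map, sum_map_val,
    prod_map_val, Multiset.card_map, card_val, Nat.cast_mul, Nat.cast_prod,
    Function.comp_def, hfact, ← add_sum_erase _ _ hqp, ← card_erase_add_one hqp]
  push_cast
  rw [show (((univ.erase p).erase q).card : ℤ) + 1 + 1 - 2 =
    (((univ.erase p).erase q).card : ℕ) by ring, zpow_natCast, div_div]
  ring

theorem Multiset.exists_fin_map_univ {α : Type*} (t : Multiset α) :
    ∃ n, ∃ c : Fin n → α, univ.val.map c = t :=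
  Quotient.inductionOn t fun l => ⟨l.length, l.get, by simp⟩

theorem Fin.map_univ_erase_zero_val_cons {α : Type*} {n : ℕ} (a : α) (c : Fin n → α) :
    (univ.erase 0).val.map (Fin.cons a c : Fin (n + 1) → α) = univ.val.map c := by
  have h : univ.val.map (Fin.cons a c : Fin (n + 1) → α) = a ::ₘ univ.val.map c := by
    simp [List.ofFn_succ]
  rw [← Multiset.cons_erase (mem_univ_val 0), Multiset.map_cons, Fin.cons_zero] at h
  rw [erase_val]
  exact (Multiset.cons_inj_right a).mp h

structure DiskRecursion (F : Multiset ℕ → ℚ) : Prop where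
  init : F 0 = 1
  divisor : ∀ s : Multiset ℕ, F (0 ::ₘ s) = (1 + (s.sum : ℚ)) * F s
  trr : ∀ (n : ℕ) (a : Fin (n + 2) → ℕ),
    F ((a 0 + 1) ::ₘ (univ.erase (0 : Fin (n + 2))).val.map a) =
      ∑ I ∈ univ.filter
          (fun I : Finset (Fin (n + 2)) => 0 ∈ I ∧ Fin.last (n + 1) ∉ I),
        (1 + ∑ j ∈ Iᶜ, (a j : ℚ)) * F (I.val.map a) * F (Iᶜ.val.map a)

namespace DiskRecursion

variable {F : Multiset ℕ → ℚ}

theorem apply_cons_succ_eq_closedForm (hF : DiskRecursion F) {m : ℕ} (b : Fin (m + 2) → ℕ)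
    (hb : ∀ I : Finset (Fin (m + 2)), I.card < m + 2 →
      F (I.val.map b) = closedForm (I.val.map b)) :
    F ((b 0 + 1) ::ₘ (univ.erase 0).val.map b) =
      closedForm ((b 0 + 1) ::ₘ (univ.erase 0).val.map b) := by
  rw [hF.trr, ← sum_trr_closedForm Fin.last_pos'.ne]
  refine sum_congr rfl fun I hI => ?_
  obtain ⟨h0, hlast⟩ := (mem_filter.mp hI).2
  rw [hb I ((card_lt_univ_of_notMem hlast).trans_eq (card_fin _)),
    hb Iᶜ ((card_lt_univ_of_notMem (notMem_compl.mpr h0)).trans_eq (card_fin _))]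

theorem apply_zero_singleton (hF : DiskRecursion F) : F {0} = 1 := by
  simpa [hF.init] using hF.divisor 0

theorem apply_singleton_eq_closedForm (hF : DiskRecursion F) (k : ℕ) : F {k} = closedForm {k} := by
  induction k with
  | zero => simp [hF.apply_zero_singleton, closedForm]
  | succ k ih =>
    have hsmall : ∀ I : Finset (Fin 2), I.card < 2 →
        F (I.val.map ![k, 0]) = closedForm (I.val.map ![k, 0]) := by
      intro I hI
      interval_cases hc : I.card
      · simp [card_eq_zero.mp hc, hF.init, closedForm]
      · obtain ⟨i, rfl⟩ := card_eq_one.mp hc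
        fin_cases i
        · simpa using ih
        · simp [hF.apply_zero_singleton, closedForm]
    have h := hF.apply_cons_succ_eq_closedForm ![k, 0] hsmall
    have hswap : (![k, 0] 0 + 1) ::ₘ (univ.erase 0).val.map ![k, 0] = 0 ::ₘ {k + 1} := by
      rw [show (![k, 0] : Fin 2 → ℕ) = Fin.cons k ![0] from rfl, Fin.map_univ_erase_zero_val_cons]
      exact Multiset.cons_swap (k + 1) 0 0
    rw [hswap, hF.divisor, closedForm_cons_zero] at h
    exact mul_left_cancel₀ (by positivity) h

theorem apply_eq_closedForm (hF : DiskRecursion F) (s : Multiset ℕ) : F s = closedForm s := by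
  induction hs : Multiset.card s using Nat.strong_induction_on generalizing s with
  | _ n ih =>
  match n, hs with
  | 0, hs => simp [Multiset.card_eq_zero.mp hs, hF.init, closedForm]
  | 1, hs =>
    obtain ⟨k, rfl⟩ := Multiset.card_eq_one.mp hs
    exact hF.apply_singleton_eq_closedForm k
  | m + 2, hs =>
    by_cases h0 : 0 ∈ s
    · obtain ⟨t, rfl⟩ := Multiset.exists_cons_of_mem h0
      rw [Multiset.card_cons] at hs
      rw [hF.divisor, ih _ (by omega) t rfl, closedForm_cons_zero]
    obtain ⟨a, ha⟩ := Multiset.card_pos_iff_exists_mem.mp (by omega : 0 < Multiset.card s)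
    obtain ⟨k, rfl⟩ := Nat.exists_eq_succ_of_ne_zero (ne_of_mem_of_not_mem ha h0)
    obtain ⟨t, rfl⟩ := Multiset.exists_cons_of_mem ha
    obtain ⟨n, c, rfl⟩ := t.exists_fin_map_univ
    obtain rfl : n = m + 1 := by simpa using hs
    have h := hF.apply_cons_succ_eq_closedForm (Fin.cons k c) fun I hI => ih _ hI _ (by simp)
    rwa [Fin.cons_zero, Fin.map_univ_erase_zero_val_cons] at h

end DiskRecursion

/-- The stationary descendent disk-cover invariants in genus 0: a function `F` on finite
multisets of non-negative integers satisfying the initial condition, the divisor equation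
and the topological recursion is given by the closed formula
`F(a_1,…,a_n) = (1 + ∑ a_i)^(n-2) / ∏ a_i!`. -/
theorem stmt0 (F : Multiset ℕ → ℚ)
    (h_init : F 0 = 1)
    (h_div : ∀ s : Multiset ℕ, F (0 ::ₘ s) = (1 + (s.sum : ℚ)) * F s)
    (h_trr : ∀ (n : ℕ) (a : Fin (n + 2) → ℕ),
      F ((a 0 + 1) ::ₘ (Finset.univ.erase (0 : Fin (n + 2))).val.map a) =
        ∑ I ∈ Finset.univ.filter
            (fun I : Finset (Fin (n + 2)) => 0 ∈ I ∧ Fin.last (n + 1) ∉ I),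
          (1 + ∑ j ∈ Iᶜ, (a j : ℚ)) * F (I.val.map a) * F (Iᶜ.val.map a)) :
    ∀ (n : ℕ) (a : Fin n → ℕ),
      F (Finset.univ.val.map a) =
        (1 + ∑ i, (a i : ℚ)) ^ ((n : ℤ) - 2) / ∏ i, (Nat.factorial (a i) : ℚ) := by
  intro n a
  rw [DiskRecursion.apply_eq_closedForm ⟨h_init, h_div, h_trr⟩, closedForm_map, Finset.card_fin]
end

section
/- For every integer n ≥ 2, L_n(a_1,…,a_n) = (1 + a_1 + ⋯ + a_n)^{n−2} as polynomials with integer coefficients; equivalently, the identity ∑_{(I,J)} t(I,J) = (1 + ∑_{i=1}^n a_i)^{n−2} holds for all values of a_1,…,a_n in any commutative ring. -/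
open Finset

section Hurwitz

variable {ι : Type*} [DecidableEq ι] {R : Type*} [CommRing R]

/-- `hphi ε x S = x (x + ε_S)^{|S|-1}`, with the convention `hphi ε x ∅ = 1`. -/
def hphi (ε : ι → R) (x : R) (S : Finset ι) : R :=
  if S = ∅ then 1 else x * (x + ∑ i ∈ S, ε i) ^ (S.card - 1)

/-- The Hurwitz sum. -/
def hg (ε : ι → R) (T : Finset ι) (x y : R) : R :=
  ∑ S ∈ T.powerset, hphi ε x S * (y + ∑ j ∈ T \ S, ε j) ^ (T.card - S.card)

lemma powerset_filter_not_mem (T : Finset ι) (a : ι) :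
    T.powerset.filter (fun S => a ∉ S) = (T.erase a).powerset := by
  ext S
  simp [Finset.subset_erase]

lemma sdiff_eq_insert {T S : Finset ι} {a : ι} (ha : a ∈ T) (hS : S ⊆ T.erase a) :
    T \ S = insert a ((T.erase a) \ S) := by
  ext j
  simp only [mem_sdiff, mem_insert, mem_erase]
  constructor
  · rintro ⟨hjT, hjS⟩
    by_cases h : j = a
    · exact Or.inl h
    · exact Or.inr ⟨⟨h, hjT⟩, hjS⟩
  · rintro (rfl | ⟨⟨_, hjT⟩, hjS⟩)
    · exact ⟨ha, fun h => (Finset.mem_erase.mp (hS h)).1 rfl⟩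
    · exact ⟨hjT, hjS⟩

theorem hg_eq (ε : ι → R) (T : Finset ι) :
    ∀ x y : R, hg ε T x y = (x + y + ∑ i ∈ T, ε i) ^ T.card := by
  induction T using Finset.strongInduction with
  | _ T IH =>
  intro x y
  rcases T.eq_empty_or_nonempty with rfl | ⟨a, ha⟩
  · simp [hg, hphi]
  have hTc : T.card - 1 + 1 = T.card := by
    have := Finset.card_pos.mpr ⟨a, ha⟩; omega
  -- the key reduction to the inductive hypothesis, for any b ∈ T
  have key : ∀ b ∈ T, ∀ u z : R,
      hg ε (T.erase b) u (z + ε b) = (u + z + ∑ i ∈ T, ε i) ^ (T.card - 1) := by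
    intro b hb u z
    rw [IH _ (Finset.erase_ssubset hb), Finset.card_erase_of_mem hb]
    congr 1
    rw [← Finset.add_sum_erase T ε hb]
    ring
  -- "A-sum": for any b ∈ T
  have noa : ∀ b ∈ T, ∀ u v : R,
      ∑ S ∈ (T.erase b).powerset, hphi ε u S * hphi ε v (T \ S)
        = v * (u + v + ∑ i ∈ T, ε i) ^ (T.card - 1) := by
    intro b hb u v
    have step : ∀ S ∈ (T.erase b).powerset, hphi ε u S * hphi ε v (T \ S)
        = v * (hphi ε u S *
            ((v + ε b) + ∑ j ∈ (T.erase b) \ S, ε j) ^ ((T.erase b).card - S.card)) := by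
      intro S hS
      have hSub := Finset.mem_powerset.mp hS
      have h1 : T \ S = insert b ((T.erase b) \ S) := sdiff_eq_insert hb hSub
      have h2 : b ∉ (T.erase b) \ S := by simp
      have h3 : hphi ε v (T \ S)
          = v * ((v + ε b) + ∑ j ∈ (T.erase b) \ S, ε j) ^ ((T.erase b).card - S.card) := by
        rw [hphi, h1, if_neg (Finset.insert_ne_empty _ _), Finset.sum_insert h2,
          Finset.card_insert_of_notMem h2, Finset.card_sdiff_of_subset hSub, Nat.add_sub_cancel]
        ring
      rw [h3]; ring
    rw [Finset.sum_congr rfl step, ← Finset.mul_sum]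
    rw [show (∑ S ∈ (T.erase b).powerset, hphi ε u S *
        ((v + ε b) + ∑ j ∈ (T.erase b) \ S, ε j) ^ ((T.erase b).card - S.card))
        = hg ε (T.erase b) u (v + ε b) from rfl, key b hb u v]
  -- the f-identity
  have hf : ∑ S ∈ T.powerset, hphi ε x S * hphi ε y (T \ S)
      = (x + y) * (x + y + ∑ i ∈ T, ε i) ^ (T.card - 1) := by
    rw [← Finset.sum_filter_add_sum_filter_not T.powerset (fun S => a ∈ S)]
    have hswap : ∑ S ∈ T.powerset.filter (fun S => a ∈ S), hphi ε x S * hphi ε y (T \ S)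
        = ∑ S ∈ (T.erase a).powerset, hphi ε y S * hphi ε x (T \ S) := by
      rw [← powerset_filter_not_mem T a]
      refine Finset.sum_nbij' (fun S => T \ S) (fun S => T \ S) ?_ ?_ ?_ ?_ ?_
      · intro S hS
        simp only [Finset.mem_filter, Finset.mem_powerset] at hS ⊢
        exact ⟨Finset.sdiff_subset, fun h => (Finset.mem_sdiff.mp h).2 hS.2⟩
      · intro S hS
        simp only [Finset.mem_filter, Finset.mem_powerset] at hS ⊢
        refine ⟨Finset.sdiff_subset, ?_⟩
        exact Finset.mem_sdiff.mpr ⟨ha, hS.2⟩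
      · intro S hS
        simp only [Finset.mem_filter, Finset.mem_powerset] at hS
        exact Finset.sdiff_sdiff_eq_self hS.1
      · intro S hS
        simp only [Finset.mem_filter, Finset.mem_powerset] at hS
        exact Finset.sdiff_sdiff_eq_self hS.1
      · intro S hS
        simp only [Finset.mem_filter, Finset.mem_powerset] at hS
        rw [Finset.sdiff_sdiff_eq_self hS.1]
        ring
    rw [hswap, powerset_filter_not_mem T a, noa a ha y x, noa a ha x y]
    ring
  -- expand each term of the Hurwitz sum
  have expand : ∀ S ∈ T.powerset,
      hphi ε x S * (y + ∑ j ∈ T \ S, ε j) ^ (T.card - S.card)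
        = hphi ε x S * hphi ε y (T \ S)
          + ∑ b ∈ T \ S, hphi ε x S *
              (ε b * (y + ∑ j ∈ T \ S, ε j) ^ (T.card - S.card - 1)) := by
    intro S hS
    have hSub := Finset.mem_powerset.mp hS
    rcases eq_or_ne S T with rfl | hne
    · simp [hphi]
    · have hssub : S ⊂ T := Finset.ssubset_iff_subset_ne.mpr ⟨hSub, hne⟩
      have hlt : S.card < T.card := Finset.card_lt_card hssub
      have hm : T.card - S.card = (T.card - S.card - 1) + 1 := by omega
      have hcd : (T \ S).card = T.card - S.card := Finset.card_sdiff_of_subset hSub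
      have hnem : T \ S ≠ ∅ := by
        intro h; rw [h, Finset.card_empty] at hcd; omega
      have hy : hphi ε y (T \ S) = y * (y + ∑ i ∈ T \ S, ε i) ^ (T.card - S.card - 1) := by
        rw [show hphi ε y (T \ S) = y * (y + ∑ i ∈ T \ S, ε i) ^ ((T \ S).card - 1)
          from if_neg hnem, hcd]
      rw [← Finset.mul_sum, ← Finset.sum_mul, hy]
      conv_lhs => rw [hm]
      rw [pow_succ]
      ring
  rw [hg, Finset.sum_congr rfl expand, Finset.sum_add_distrib, hf]
  -- handle the double sum
  have hD : ∑ S ∈ T.powerset, ∑ b ∈ T \ S, hphi ε x S *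
        (ε b * (y + ∑ j ∈ T \ S, ε j) ^ (T.card - S.card - 1))
      = (∑ i ∈ T, ε i) * (x + y + ∑ i ∈ T, ε i) ^ (T.card - 1) := by
    have h1 : ∀ S ∈ T.powerset, ∑ b ∈ T \ S, hphi ε x S *
          (ε b * (y + ∑ j ∈ T \ S, ε j) ^ (T.card - S.card - 1))
        = ∑ b ∈ T, if b ∉ S then hphi ε x S *
            (ε b * (y + ∑ j ∈ T \ S, ε j) ^ (T.card - S.card - 1)) else 0 := by
      intro S hS
      rw [Finset.sdiff_eq_filter, Finset.sum_filter]
    rw [Finset.sum_congr rfl h1, Finset.sum_comm]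
    have h2 : ∀ b ∈ T, (∑ S ∈ T.powerset, if b ∉ S then hphi ε x S *
          (ε b * (y + ∑ j ∈ T \ S, ε j) ^ (T.card - S.card - 1)) else 0)
        = ε b * (x + y + ∑ i ∈ T, ε i) ^ (T.card - 1) := by
      intro b hb
      rw [← Finset.sum_filter, powerset_filter_not_mem T b]
      have h3 : ∀ S ∈ (T.erase b).powerset, hphi ε x S *
            (ε b * (y + ∑ j ∈ T \ S, ε j) ^ (T.card - S.card - 1))
          = ε b * (hphi ε x S *
              ((y + ε b) + ∑ j ∈ (T.erase b) \ S, ε j) ^ ((T.erase b).card - S.card)) := by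
        intro S hS
        have hSub := Finset.mem_powerset.mp hS
        have h4 : T \ S = insert b ((T.erase b) \ S) := sdiff_eq_insert hb hSub
        have h5 : b ∉ (T.erase b) \ S := by simp
        have hcS : S.card ≤ (T.erase b).card := Finset.card_le_card hSub
        have hce : (T.erase b).card = T.card - 1 := Finset.card_erase_of_mem hb
        have h6 : T.card - S.card - 1 = (T.erase b).card - S.card := by omega
        rw [h4, Finset.sum_insert h5, h6]
        ring
      rw [Finset.sum_congr rfl h3, ← Finset.mul_sum]
      rw [show (∑ S ∈ (T.erase b).powerset, hphi ε x S *
          ((y + ε b) + ∑ j ∈ (T.erase b) \ S, ε j) ^ ((T.erase b).card - S.card))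
          = hg ε (T.erase b) x (y + ε b) from rfl, key b hb x y]
    rw [Finset.sum_congr rfl h2, ← Finset.sum_mul]
  rw [hD, show (x + y + ∑ i ∈ T, ε i) ^ T.card
      = (x + y + ∑ i ∈ T, ε i) ^ (T.card - 1) * (x + y + ∑ i ∈ T, ε i)
    from by rw [← pow_succ, hTc]]
  ring

end Hurwitz

/-- The genus-0 combinatorial identity: for `n + 2 ≥ 2` variables `a_1, …, a_{n+2}` in any
commutative ring,
`∑_{(I,J)} a_1 a_I^{|I|-2} (1+a_J)^{|J|-1} = (1 + ∑ a_i)^{n}`,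
the sum over pairs `(I,J)` of disjoint sets with union `{1,…,n+2}`, `1 ∈ I`, `n+2 ∈ J`,
with the convention that the `|I| = 1` term is `(1+a_J)^{n}`. -/
theorem stmt1 {R : Type*} [CommRing R] (n : ℕ) (a : Fin (n + 2) → R) :
    (∑ I ∈ Finset.univ.filter
        (fun I : Finset (Fin (n + 2)) => 0 ∈ I ∧ Fin.last (n + 1) ∉ I),
      if I.card = 1 then (1 + ∑ j ∈ Iᶜ, a j) ^ n
      else a 0 * (∑ i ∈ I, a i) ^ (I.card - 2) * (1 + ∑ j ∈ Iᶜ, a j) ^ (Iᶜ.card - 1)) =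
    (1 + ∑ i, a i) ^ n := by
  classical
  have hne : (Fin.last (n + 1) : Fin (n + 2)) ≠ 0 := by
    simp [Fin.ext_iff]
  set T : Finset (Fin (n + 2)) := (Finset.univ.erase 0).erase (Fin.last (n + 1)) with hT
  have hl0 : Fin.last (n + 1) ∈ Finset.univ.erase (0 : Fin (n + 2)) :=
    Finset.mem_erase.mpr ⟨hne, Finset.mem_univ _⟩
  have hTcard : T.card = n := by
    rw [hT, Finset.card_erase_of_mem hl0,
      Finset.card_erase_of_mem (Finset.mem_univ _), Finset.card_univ, Fintype.card_fin]
    omega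
  have h0T : (0 : Fin (n + 2)) ∉ T := by simp [hT]
  have hlT : Fin.last (n + 1) ∉ T := by simp [hT]
  have hL : (∑ I ∈ Finset.univ.filter
        (fun I : Finset (Fin (n + 2)) => 0 ∈ I ∧ Fin.last (n + 1) ∉ I),
      if I.card = 1 then (1 + ∑ j ∈ Iᶜ, a j) ^ n
      else a 0 * (∑ i ∈ I, a i) ^ (I.card - 2) * (1 + ∑ j ∈ Iᶜ, a j) ^ (Iᶜ.card - 1)) =
      hg a T (a 0) (1 + a (Fin.last (n + 1))) := by
    rw [hg]
    refine Finset.sum_nbij' (fun I => I.erase 0) (fun S => insert 0 S) ?_ ?_ ?_ ?_ ?_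
    · intro I hI
      obtain ⟨-, h0, hl⟩ := Finset.mem_filter.mp hI
      rw [Finset.mem_powerset]
      intro j hj
      obtain ⟨hj0, hjI⟩ := Finset.mem_erase.mp hj
      refine Finset.mem_erase.mpr ⟨?_, Finset.mem_erase.mpr ⟨hj0, Finset.mem_univ _⟩⟩
      rintro rfl; exact hl hjI
    · intro S hS
      have hSub := Finset.mem_powerset.mp hS
      refine Finset.mem_filter.mpr ⟨Finset.mem_univ _, Finset.mem_insert_self _ _, ?_⟩
      intro h
      rcases Finset.mem_insert.mp h with h | h
      · exact hne h
      · exact hlT (hSub h)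
    · intro I hI
      obtain ⟨-, h0, -⟩ := Finset.mem_filter.mp hI
      exact Finset.insert_erase h0
    · intro S hS
      exact Finset.erase_insert (fun h => h0T (Finset.mem_powerset.mp hS h))
    · intro I hI
      beta_reduce
      obtain ⟨-, h0, hl⟩ := Finset.mem_filter.mp hI
      have hScard : I.card = (I.erase 0).card + 1 := (Finset.card_erase_add_one h0).symm
      have hSsubT : I.erase 0 ⊆ T := by
        intro j hj
        obtain ⟨hj0, hjI⟩ := Finset.mem_erase.mp hj
        refine Finset.mem_erase.mpr ⟨?_, Finset.mem_erase.mpr ⟨hj0, Finset.mem_univ _⟩⟩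
        rintro rfl; exact hl hjI
      have hlnotin : Fin.last (n + 1) ∉ T \ I.erase 0 :=
        fun h => hlT (Finset.mem_sdiff.mp h).1
      have hcompl : Iᶜ = insert (Fin.last (n + 1)) (T \ I.erase 0) := by
        ext j
        simp only [Finset.mem_compl, Finset.mem_insert, Finset.mem_sdiff, Finset.mem_erase,
          Finset.mem_univ, and_true, hT]
        constructor
        · intro hj
          by_cases hjl : j = Fin.last (n + 1)
          · exact Or.inl hjl
          · refine Or.inr ⟨⟨hjl, ?_⟩, fun h => hj h.2⟩
            rintro rfl; exact hj h0
        · rintro (rfl | ⟨⟨hjl, hj0⟩, h⟩)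
          · exact hl
          · exact fun hjI => h ⟨hj0, hjI⟩
      have hcsum : ∑ j ∈ Iᶜ, a j = a (Fin.last (n + 1)) + ∑ j ∈ T \ I.erase 0, a j := by
        rw [hcompl, Finset.sum_insert hlnotin]
      have hccard : Iᶜ.card = (T \ I.erase 0).card + 1 := by
        rw [hcompl, Finset.card_insert_of_notMem hlnotin]
      have hTScard : (T \ I.erase 0).card = T.card - (I.erase 0).card :=
        Finset.card_sdiff_of_subset hSsubT
      have hSle : (I.erase 0).card ≤ T.card := Finset.card_le_card hSsubT
      by_cases h1 : I.card = 1
      · have hSe : I.erase 0 = ∅ := Finset.card_eq_zero.mp (by omega)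
        rw [hSe] at hcsum ⊢
        rw [if_pos h1, show hphi a (a 0) (∅ : Finset (Fin (n + 2))) = 1 from if_pos rfl,
          one_mul, Finset.card_empty, Nat.sub_zero, hTcard, hcsum]
        ring_nf
      · have hSne : I.erase 0 ≠ ∅ := by
          intro h
          rw [h, Finset.card_empty] at hScard
          omega
        rw [if_neg h1, show hphi a (a 0) (I.erase 0)
            = a 0 * (a 0 + ∑ i ∈ I.erase 0, a i) ^ ((I.erase 0).card - 1) from if_neg hSne,
          ← Finset.add_sum_erase I a h0, hcsum,
          show I.card - 2 = (I.erase 0).card - 1 from by omega,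
          show Iᶜ.card - 1 = T.card - (I.erase 0).card from by omega]
        ring
  rw [hL, hg_eq, hTcard]
  congr 1
  rw [show (∑ i, a i) = a 0 + (a (Fin.last (n + 1)) + ∑ i ∈ T, a i) from by
    rw [← Finset.add_sum_erase _ a (Finset.mem_univ 0), ← Finset.add_sum_erase _ a hl0]]
  ring
end

section
/- For every integer n ≥ 2 and all non-negative integers a_1,…,a_n: N(a_1+1, a_2, a_3, …, a_n) = ∑_{(R,S)} (1 + a_2 + ∑_{i∈S} a_i) · N((a_i)_{i∈{1}∪R}) · N((a_j)_{j∈{2}∪S}), where the sum is over all pairs (R,S) of disjoint sets with R ∪ S = {3,…,n}. (This is the non-equivariant open topological recursion relation for genus-0 disk covers, verified on the closed formula for the disk-cover stationary invariants.) -/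
open Finset Polynomial

section Aux

variable {ι : Type*} [DecidableEq ι]

lemma findiff (z : ι → ℚ) (T : Finset ι) : ∀ (m : ℕ), m < T.card → ∀ x : ℚ,
    ∑ R ∈ T.powerset, (-1 : ℚ) ^ R.card * (x + ∑ i ∈ R, z i) ^ m = 0 := by
  induction T using Finset.cons_induction with
  | empty => intro m hm; simp at hm
  | cons j T' hj ih =>
    intro m hm x
    have hm' : m ≤ T'.card := by rw [Finset.card_cons] at hm; omega
    rw [Finset.cons_eq_insert, Finset.sum_powerset_insert hj]
    have step : ∀ R ∈ T'.powerset,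
        (-1 : ℚ) ^ (insert j R).card * (x + ∑ i ∈ insert j R, z i) ^ m
          = -((-1 : ℚ) ^ R.card * ((x + ∑ i ∈ R, z i) + z j) ^ m) := by
      intro R hR
      have hjR : j ∉ R := fun h => hj (Finset.mem_powerset.mp hR h)
      rw [Finset.card_insert_of_notMem hjR, Finset.sum_insert hjR, pow_succ]
      ring_nf
    rw [Finset.sum_congr rfl step, Finset.sum_neg_distrib]
    have expand : ∀ R ∈ T'.powerset,
        (-1 : ℚ) ^ R.card * ((x + ∑ i ∈ R, z i) + z j) ^ m
          = (-1 : ℚ) ^ R.card * (x + ∑ i ∈ R, z i) ^ m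
            + ∑ k ∈ Finset.range m,
                (-1 : ℚ) ^ R.card * (x + ∑ i ∈ R, z i) ^ k * (z j ^ (m - k) * (m.choose k)) := by
      intro R _
      rw [add_pow, Finset.sum_range_succ, Nat.sub_self, pow_zero, Nat.choose_self,
        Nat.cast_one, mul_one, mul_one, mul_add, Finset.mul_sum, add_comm]
      congr 1
      exact Finset.sum_congr rfl fun k _ => by ring
    rw [Finset.sum_congr rfl expand, Finset.sum_add_distrib]
    have inner : ∀ k ∈ Finset.range m,
        ∑ R ∈ T'.powerset,
          (-1 : ℚ) ^ R.card * (x + ∑ i ∈ R, z i) ^ k * (z j ^ (m - k) * (m.choose k)) = 0 := by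
      intro k hk
      rw [← Finset.sum_mul, ih k (lt_of_lt_of_le (Finset.mem_range.mp hk) hm') x, zero_mul]
    rw [Finset.sum_comm, Finset.sum_congr rfl inner]
    simp

lemma swap_powerset {M : Type*} [AddCommMonoid M] (T : Finset ι) (F : Finset ι → ι → M) :
    ∑ R ∈ T.powerset, ∑ j ∈ T \ R, F R j
      = ∑ j ∈ T, ∑ R ∈ (T.erase j).powerset, F R j := by
  have h1 : ∀ R ∈ T.powerset, ∑ j ∈ T \ R, F R j
      = ∑ j ∈ T, if j ∈ R then 0 else F R j := by
    intro R hR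
    rw [Finset.sdiff_eq_filter, Finset.sum_filter]
    exact Finset.sum_congr rfl fun j _ => by by_cases h : j ∈ R <;> simp [h]
  rw [Finset.sum_congr rfl h1, Finset.sum_comm]
  refine Finset.sum_congr rfl fun j hj => ?_
  have hT : T = insert j (T.erase j) := (Finset.insert_erase hj).symm
  rw [hT]
  rw [Finset.sum_powerset_insert (Finset.notMem_erase j T)]
  have h2 : ∀ R ∈ (T.erase j).powerset,
      (if j ∈ insert j R then (0:M) else F (insert j R) j) = 0 := by
    intro R _; simp
  have h3 : ∀ R ∈ (T.erase j).powerset,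
      (if j ∈ R then (0:M) else F R j) = F R j := by
    intro R hR
    have : j ∉ R := fun h => (Finset.notMem_erase j T) (Finset.mem_powerset.mp hR h)
    simp [this]
  rw [Finset.sum_congr rfl h2, Finset.sum_congr rfl h3]
  simp [← hT]

lemma hurwitzPoly (x : ℚ) (z : ι → ℚ) (hx : 0 < x) (hz : ∀ i, 0 ≤ z i) (T : Finset ι) :
    ∑ R ∈ T.powerset, C (x * (x + ∑ i ∈ R, z i) ^ ((R.card : ℤ) - 1)) *
        (X + C (∑ i ∈ T \ R, z i)) ^ (T \ R).card
      = (X + C (x + ∑ i ∈ T, z i)) ^ T.card := by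
  have hpos : ∀ R : Finset ι, 0 < x + ∑ i ∈ R, z i :=
    fun R => add_pos_of_pos_of_nonneg hx (Finset.sum_nonneg fun i _ => hz i)
  induction T using Finset.strongInduction with
  | _ T ih =>
    rcases T.eq_empty_or_nonempty with rfl | hT
    · simp only [Finset.powerset_empty, Finset.sum_singleton, Finset.card_empty,
        Finset.sum_empty, Finset.sdiff_empty, Nat.cast_zero, zero_sub, zpow_neg, zpow_one,
        pow_zero, mul_one]
      rw [add_zero, mul_inv_cancel₀ hx.ne', C_1]
    · -- derivative equality
      have hcard : 1 ≤ T.card := Finset.card_pos.mpr hT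
      have hder : derivative (∑ R ∈ T.powerset, C (x * (x + ∑ i ∈ R, z i) ^ ((R.card : ℤ) - 1)) *
            (X + C (∑ i ∈ T \ R, z i)) ^ (T \ R).card)
          = derivative ((X + C (x + ∑ i ∈ T, z i)) ^ T.card) := by
        rw [derivative_sum, derivative_pow, derivative_X_add_C, mul_one]
        have e1 : ∀ R ∈ T.powerset,
            derivative (C (x * (x + ∑ i ∈ R, z i) ^ ((R.card : ℤ) - 1)) *
              (X + C (∑ i ∈ T \ R, z i)) ^ (T \ R).card)
            = ∑ j ∈ T \ R, C (x * (x + ∑ i ∈ R, z i) ^ ((R.card : ℤ) - 1)) *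
                (X + C (∑ i ∈ T \ R, z i)) ^ ((T \ R).card - 1) := by
          intro R hR
          rw [derivative_C_mul, derivative_pow, derivative_X_add_C, mul_one,
            Finset.sum_const, nsmul_eq_mul, ← C_eq_natCast]
          ring
        rw [Finset.sum_congr rfl e1, swap_powerset]
        have e2 : ∀ j ∈ T, ∑ R ∈ (T.erase j).powerset,
            C (x * (x + ∑ i ∈ R, z i) ^ ((R.card : ℤ) - 1)) *
              (X + C (∑ i ∈ T \ R, z i)) ^ ((T \ R).card - 1)
            = (X + C (x + ∑ i ∈ T, z i)) ^ (T.card - 1) := by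
          intro j hj
          have ihj := ih (T.erase j) (Finset.erase_ssubset hj)
          have hcomp := congrArg (fun p => p.comp (X + C (z j))) ihj
          simp only [Polynomial.sum_comp, mul_comp, C_comp, pow_comp, add_comp, X_comp] at hcomp
          have e3 : ∀ R ∈ (T.erase j).powerset,
              C (x * (x + ∑ i ∈ R, z i) ^ ((R.card : ℤ) - 1)) *
                (X + C (∑ i ∈ T \ R, z i)) ^ ((T \ R).card - 1)
              = C (x * (x + ∑ i ∈ R, z i) ^ ((R.card : ℤ) - 1)) *
                (X + C (z j) + C (∑ i ∈ T.erase j \ R, z i)) ^ ((T.erase j \ R).card) := by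
            intro R hR
            have hjR : j ∉ T.erase j \ R := fun h => Finset.notMem_erase j T (Finset.mem_sdiff.mp h).1
            have hTR : T \ R = insert j (T.erase j \ R) := by
              conv_lhs => rw [← Finset.insert_erase hj]
              rw [Finset.insert_sdiff_of_notMem _
                (fun h => Finset.notMem_erase j T (Finset.mem_powerset.mp hR h))]
            rw [hTR, Finset.sum_insert hjR, Finset.card_insert_of_notMem hjR,
              Nat.add_sub_cancel, C_add, add_assoc]
          rw [Finset.sum_congr rfl e3, hcomp, add_assoc, ← C_add,
            show z j + (x + ∑ i ∈ T.erase j, z i) = x + ∑ i ∈ T, z i by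
              rw [← Finset.add_sum_erase T z hj]; ring,
            Finset.card_erase_of_mem hj]
        rw [Finset.sum_congr rfl e2, Finset.sum_const, nsmul_eq_mul, ← C_eq_natCast]
      have heval : eval (-(x + ∑ i ∈ T, z i))
            (∑ R ∈ T.powerset, C (x * (x + ∑ i ∈ R, z i) ^ ((R.card : ℤ) - 1)) *
              (X + C (∑ i ∈ T \ R, z i)) ^ (T \ R).card)
          = eval (-(x + ∑ i ∈ T, z i)) ((X + C (x + ∑ i ∈ T, z i)) ^ T.card) := by
        rw [eval_pow, eval_add, eval_X, eval_C, neg_add_cancel,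
          zero_pow (by omega : T.card ≠ 0), eval_finset_sum]
        have e4 : ∀ R ∈ T.powerset,
            eval (-(x + ∑ i ∈ T, z i))
              (C (x * (x + ∑ i ∈ R, z i) ^ ((R.card : ℤ) - 1)) *
                (X + C (∑ i ∈ T \ R, z i)) ^ (T \ R).card)
            = ((-1 : ℚ) ^ T.card * x) *
                ((-1 : ℚ) ^ R.card * (x + ∑ i ∈ R, z i) ^ (T.card - 1)) := by
          intro R hR
          have hsub := Finset.mem_powerset.mp hR
          have hu := (hpos R).ne'
          rw [eval_mul, eval_pow, eval_add, eval_X, eval_C, eval_C]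
          have h5 : -(x + ∑ i ∈ T, z i) + ∑ i ∈ T \ R, z i = -(x + ∑ i ∈ R, z i) := by
            rw [← Finset.sum_sdiff hsub]; ring
          rw [h5, neg_pow]
          have hpow : (x + ∑ i ∈ R, z i) ^ ((R.card : ℤ) - 1) *
              (x + ∑ i ∈ R, z i) ^ ((T \ R).card)
              = (x + ∑ i ∈ R, z i) ^ (T.card - 1) := by
            rw [← zpow_natCast (x + ∑ i ∈ R, z i) (T \ R).card, ← zpow_add₀ hu,
              ← zpow_natCast (x + ∑ i ∈ R, z i) (T.card - 1)]
            congr 1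
            have h6 := Finset.card_sdiff_add_card_eq_card hsub
            push_cast
            omega
          have hsign : ((-1 : ℚ)) ^ ((T \ R).card) = (-1) ^ T.card * (-1) ^ R.card := by
            have h7 : (T \ R).card + R.card = T.card := Finset.card_sdiff_add_card_eq_card hsub
            have h8 : ((-1 : ℚ) ^ R.card) * ((-1 : ℚ) ^ R.card) = 1 := by
              rw [← pow_add]; exact Even.neg_one_pow ⟨R.card, rfl⟩
            rw [← h7, pow_add, mul_assoc, h8, mul_one]
          rw [hsign]
          calc x * (x + ∑ i ∈ R, z i) ^ ((R.card : ℤ) - 1) *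
                (((-1 : ℚ) ^ T.card * (-1) ^ R.card) * (x + ∑ i ∈ R, z i) ^ ((T \ R).card))
              = ((-1 : ℚ) ^ T.card * x) * ((-1) ^ R.card *
                  ((x + ∑ i ∈ R, z i) ^ ((R.card : ℤ) - 1) *
                    (x + ∑ i ∈ R, z i) ^ ((T \ R).card))) := by ring
            _ = _ := by rw [hpow]
        rw [Finset.sum_congr rfl e4, ← Finset.mul_sum,
          findiff z T (T.card - 1) (by omega) x, mul_zero]
      have hsub0 : derivative
          ((∑ R ∈ T.powerset, C (x * (x + ∑ i ∈ R, z i) ^ ((R.card : ℤ) - 1)) *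
              (X + C (∑ i ∈ T \ R, z i)) ^ (T \ R).card)
            - (X + C (x + ∑ i ∈ T, z i)) ^ T.card) = 0 := by
        rw [map_sub, hder, sub_self]
      have hC := Polynomial.eq_C_of_derivative_eq_zero hsub0
      have h9 := congrArg (eval (-(x + ∑ i ∈ T, z i))) hC
      rw [eval_sub, heval, sub_self, eval_C] at h9
      have h10 : (∑ R ∈ T.powerset, C (x * (x + ∑ i ∈ R, z i) ^ ((R.card : ℤ) - 1)) *
              (X + C (∑ i ∈ T \ R, z i)) ^ (T \ R).card)
            - (X + C (x + ∑ i ∈ T, z i)) ^ T.card = 0 := by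
        rw [hC, ← h9, C_0]
      exact sub_eq_zero.mp h10

end Aux

section Aux2

lemma hurwitzQ {ι : Type*} [DecidableEq ι] (x y : ℚ) (z : ι → ℚ) (hx : 0 < x) (hz : ∀ i, 0 ≤ z i) (T : Finset ι) :
    ∑ S ∈ T.powerset, x * (x + ∑ i ∈ T \ S, z i) ^ (((T \ S).card : ℤ) - 1) *
        (y + ∑ i ∈ S, z i) ^ S.card
      = (x + y + ∑ i ∈ T, z i) ^ T.card := by
  have hp := congrArg (eval y) (hurwitzPoly x z hx hz T)
  simp only [eval_finset_sum, eval_mul, eval_pow, eval_add, eval_X, eval_C] at hp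
  have hre : ∑ S ∈ T.powerset, x * (x + ∑ i ∈ T \ S, z i) ^ (((T \ S).card : ℤ) - 1) *
        (y + ∑ i ∈ S, z i) ^ S.card
      = ∑ R ∈ T.powerset, x * (x + ∑ i ∈ R, z i) ^ ((R.card : ℤ) - 1) *
        (y + ∑ i ∈ T \ R, z i) ^ (T \ R).card := by
    refine Finset.sum_nbij' (fun S => T \ S) (fun R => T \ R) ?_ ?_ ?_ ?_ ?_
    · intro S hS; exact Finset.mem_powerset.mpr (Finset.sdiff_subset)
    · intro R hR; exact Finset.mem_powerset.mpr (Finset.sdiff_subset)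
    · intro S hS; exact Finset.sdiff_sdiff_eq_self (Finset.mem_powerset.mp hS)
    · intro R hR; exact Finset.sdiff_sdiff_eq_self (Finset.mem_powerset.mp hR)
    · intro S hS
      rw [Finset.sdiff_sdiff_eq_self (Finset.mem_powerset.mp hS)]
  rw [hre]
  convert hp using 2
  · ring

end Aux2


/-- The genus-0 disk-cover stationary invariant
`N(a_1,…,a_n) = (1 + ∑ a_i)^(n-2) / ∏ a_i!`, defined for a finite set of indices `s`
and exponents `a : ι → ℕ`. -/
noncomputable def diskCoverN {ι : Type*} (s : Finset ι) (a : ι → ℕ) : ℚ :=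
  (1 + ∑ i ∈ s, (a i : ℚ)) ^ ((s.card : ℤ) - 2) / ∏ i ∈ s, (Nat.factorial (a i) : ℚ)

/-- The non-equivariant open topological recursion relation for genus-0 disk covers,
verified on the closed formula for the stationary disk-cover invariants:
`N(a_1+1, a_2, …, a_n) = ∑_{(R,S)} (1 + a_2 + ∑_{i∈S} a_i) N((a_i)_{{1}∪R}) N((a_j)_{{2}∪S})`,
the sum over all pairs `(R,S)` of disjoint sets with `R ∪ S = {3,…,n}`. -/
theorem stmt2 (n : ℕ) (a : Fin (n + 2) → ℕ) :
    diskCoverN Finset.univ (Function.update a 0 (a 0 + 1)) =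
      ∑ S ∈ (Finset.univ.filter fun i : Fin (n + 2) => 2 ≤ i.1).powerset,
        (1 + (a 1 : ℚ) +
            ∑ i ∈ S, (a i : ℚ)) *
          diskCoverN
            (insert 0 ((Finset.univ.filter fun i : Fin (n + 2) => 2 ≤ i.1) \ S)) a *
          diskCoverN (insert 1 S) a := by
  classical
  set T : Finset (Fin (n + 2)) := Finset.univ.filter fun i => 2 ≤ i.1 with hTdef
  have h0T : (0 : Fin (n + 2)) ∉ T := by simp [hTdef]
  have h1T : (1 : Fin (n + 2)) ∉ T := by simp [hTdef]
  have h01 : (0 : Fin (n + 2)) ≠ 1 := by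
    simp [Fin.ext_iff]
  have huniv : (Finset.univ : Finset (Fin (n + 2))) = insert 0 (insert 1 T) := by
    ext i
    simp only [Finset.mem_univ, true_iff, Finset.mem_insert, hTdef, Finset.mem_filter, true_and]
    by_cases hi0 : i.val = 0
    · exact Or.inl (Fin.ext (by simp [hi0]))
    · by_cases hi1 : i.val = 1
      · exact Or.inr (Or.inl (Fin.ext (by simp [hi1])))
      · exact Or.inr (Or.inr (by omega))
  have h0inT : (0 : Fin (n + 2)) ∉ insert 1 T := by simp [h01, h0T]
  have hTcard : T.card = n := by
    have hu : (Finset.univ : Finset (Fin (n + 2))).card = n + 2 := by simp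
    rw [huniv, Finset.card_insert_of_notMem h0inT, Finset.card_insert_of_notMem h1T] at hu
    omega
  set x : ℚ := (a 0 : ℚ) + 1 with hxdef
  set y : ℚ := (a 1 : ℚ) + 1 with hydef
  have hx : 0 < x := by positivity
  have hy : 0 < y := by positivity
  have hz : ∀ i : Fin (n + 2), (0:ℚ) ≤ (a i : ℚ) := fun i => Nat.cast_nonneg _
  set D : ℚ := ((a 0).factorial : ℚ) * ((a 1).factorial : ℚ) *
    ∏ i ∈ T, ((a i).factorial : ℚ) with hDdef
  have hfacpos : ∀ m : ℕ, (0:ℚ) < (m.factorial : ℚ) := fun m => by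
    exact_mod_cast m.factorial_pos
  have hD : 0 < D := by
    apply mul_pos (mul_pos (hfacpos _) (hfacpos _))
    exact Finset.prod_pos fun i _ => hfacpos _
  -- rewrite each summand
  have hterm : ∀ S ∈ T.powerset,
      (1 + (a 1 : ℚ) + ∑ i ∈ S, (a i : ℚ)) * diskCoverN (insert 0 (T \ S)) a *
          diskCoverN (insert 1 S) a
        = (x * (x + ∑ i ∈ T \ S, (a i : ℚ)) ^ (((T \ S).card : ℤ) - 1) *
            (y + ∑ i ∈ S, (a i : ℚ)) ^ S.card) / (x * D) := by
    intro S hS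
    have hSsub : S ⊆ T := Finset.mem_powerset.mp hS
    have h1S : (1 : Fin (n + 2)) ∉ S := fun h => h1T (hSsub h)
    have h0TS : (0 : Fin (n + 2)) ∉ T \ S := fun h => h0T (Finset.mem_sdiff.mp h).1
    have hySpos : 0 < y + ∑ i ∈ S, (a i : ℚ) :=
      add_pos_of_pos_of_nonneg hy (Finset.sum_nonneg fun i _ => hz i)
    rw [diskCoverN, diskCoverN, Finset.sum_insert h0TS, Finset.sum_insert h1S,
      Finset.prod_insert h0TS, Finset.prod_insert h1S,
      Finset.card_insert_of_notMem h0TS, Finset.card_insert_of_notMem h1S]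
    have he0 : ((((T \ S).card + 1 : ℕ)) : ℤ) - 2 = ((T \ S).card : ℤ) - 1 := by push_cast; ring
    have he1 : (((S.card + 1 : ℕ)) : ℤ) - 2 = (S.card : ℤ) - 1 := by push_cast; ring
    rw [he0, he1]
    have hb0 : 1 + ((a 0 : ℚ) + ∑ i ∈ T \ S, (a i : ℚ)) = x + ∑ i ∈ T \ S, (a i : ℚ) := by
      rw [hxdef]; ring
    have hb1 : 1 + ((a 1 : ℚ) + ∑ i ∈ S, (a i : ℚ)) = y + ∑ i ∈ S, (a i : ℚ) := by
      rw [hydef]; ring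
    rw [hb0, hb1]
    have hfactor : (1 + (a 1 : ℚ) + ∑ i ∈ S, (a i : ℚ)) = y + ∑ i ∈ S, (a i : ℚ) := by
      rw [hydef]; ring
    rw [hfactor]
    have hzpow : (y + ∑ i ∈ S, (a i : ℚ)) * (y + ∑ i ∈ S, (a i : ℚ)) ^ ((S.card : ℤ) - 1)
        = (y + ∑ i ∈ S, (a i : ℚ)) ^ (S.card : ℕ) := by
      rw [← zpow_natCast (y + ∑ i ∈ S, (a i : ℚ)) S.card, zpow_sub₀ hySpos.ne',
        zpow_one, zpow_natCast]
      field_simp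
    have hprod : (∏ i ∈ T \ S, ((a i).factorial : ℚ)) * ∏ i ∈ S, ((a i).factorial : ℚ)
        = ∏ i ∈ T, ((a i).factorial : ℚ) := Finset.prod_sdiff hSsub
    rw [← hzpow, hDdef, ← hprod]
    have hne : ∀ s : Finset (Fin (n + 2)), (∏ i ∈ s, ((a i).factorial : ℚ)) ≠ 0 :=
      fun s => (Finset.prod_pos fun i _ => hfacpos _).ne'
    field_simp
  rw [Finset.sum_congr rfl hterm, ← Finset.sum_div,
    hurwitzQ x y (fun i => (a i : ℚ)) hx hz T, hTcard]
  -- now handle the LHS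
  have hupd : (fun i => ((Function.update a 0 (a 0 + 1) i : ℕ) : ℚ))
      = Function.update (fun i => (a i : ℚ)) 0 x := by
    funext i
    rcases eq_or_ne i 0 with rfl | h
    · simp [hxdef]
    · simp [Function.update_of_ne h]
  have hupdf : (fun i => (((Function.update a 0 (a 0 + 1) i).factorial : ℕ) : ℚ))
      = Function.update (fun i => ((a i).factorial : ℚ)) 0 (((a 0 + 1).factorial : ℚ)) := by
    funext i
    rcases eq_or_ne i 0 with rfl | h
    · simp
    · simp [Function.update_of_ne h]
  rw [diskCoverN]
  rw [show (∑ i, ((Function.update a 0 (a 0 + 1) i : ℕ) : ℚ))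
      = ∑ i, Function.update (fun i => (a i : ℚ)) 0 x i from by rw [← hupd]]
  rw [show (∏ i, ((Function.update a 0 (a 0 + 1) i).factorial : ℚ))
      = ∏ i, Function.update (fun i => ((a i).factorial : ℚ)) 0 (((a 0 + 1).factorial : ℚ)) i
      from by rw [← hupdf]]
  rw [huniv, Finset.sum_insert h0inT, Finset.prod_insert h0inT,
    Finset.sum_insert h1T, Finset.prod_insert h1T,
    Finset.card_insert_of_notMem h0inT, Finset.card_insert_of_notMem h1T, hTcard]
  rw [Function.update_self, Function.update_self]
  have hsum2 : ∑ i ∈ T, Function.update (fun i => (a i : ℚ)) 0 x i = ∑ i ∈ T, (a i : ℚ) :=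
    Finset.sum_congr rfl fun i hi =>
      Function.update_of_ne (fun h : i = 0 => h0T (h ▸ hi)) _ _
  have hprod2 : ∏ i ∈ T, Function.update (fun i => ((a i).factorial : ℚ)) 0
        (((a 0 + 1).factorial : ℚ)) i = ∏ i ∈ T, ((a i).factorial : ℚ) :=
    Finset.prod_congr rfl fun i hi =>
      Function.update_of_ne (fun h : i = 0 => h0T (h ▸ hi)) _ _
  rw [Function.update_of_ne h01.symm, Function.update_of_ne h01.symm, hsum2, hprod2]
  have hbase : 1 + (x + ((a 1 : ℚ) + ∑ i ∈ T, (a i : ℚ)))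
      = x + y + ∑ i ∈ T, (a i : ℚ) := by rw [hydef]; ring
  rw [hbase]
  have hexp : ((n + 1 + 1 : ℕ) : ℤ) - 2 = ((n : ℕ) : ℤ) := by push_cast; ring
  rw [hexp]
  have hfact : ((a 0 + 1).factorial : ℚ) = x * ((a 0).factorial : ℚ) := by
    rw [Nat.factorial_succ, hxdef]; push_cast; ring
  rw [hfact, zpow_natCast]
  rw [hDdef]
  ring
end

section
/- For every function G : D → R there exists exactly one solution P of the corner-recursion system for G. -/
/-- A disk (moduli) specification: a finite set of internal labels together with a
degree `(d⁺, d⁻)`, satisfying the stability condition `2|l| + 3(d⁺+d⁻) > 2`. -/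
structure DiskSpec where
  l : Finset ℕ
  dp : ℕ
  dm : ℕ
  stab : 2 < 2 * l.card + 3 * (dp + dm)

/-- `(δ₁, δ₂)` is a splitting of `δ`: labels partition, degrees add up, and both halves
have nonzero degree. -/
def IsSplitting (δ δ₁ δ₂ : DiskSpec) : Prop :=
  Disjoint δ₁.l δ₂.l ∧ δ₁.l ∪ δ₂.l = δ.l ∧
    δ₁.dp + δ₂.dp = δ.dp ∧ δ₁.dm + δ₂.dm = δ.dm ∧
    ¬(δ₁.dp = 0 ∧ δ₁.dm = 0) ∧ ¬(δ₂.dp = 0 ∧ δ₂.dm = 0)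

/-- `P` is a solution of the corner-recursion system for `G`: for each `δ` the family
`P (·) δ` has finite support, its alternating sum is `G δ`, and for `c ≥ 1` the corner
contribution `P c δ` is the quadratic expression in lower corner contributions coming
from splittings of `δ`. -/
def IsCornerSolution {R : Type*} [CommRing R] [Algebra ℚ R] (u : R)
    (G : DiskSpec → R) (P : ℕ → DiskSpec → R) : Prop :=
  (∀ δ : DiskSpec, {c : ℕ | P c δ ≠ 0}.Finite) ∧
  (∀ δ : DiskSpec, ∑ᶠ c : ℕ, (-1 : R) ^ c * P c δ = G δ) ∧
  (∀ δ : DiskSpec, ∀ c : ℕ, 1 ≤ c →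
    P c δ = ((1 : ℚ) / 2 * (1 / (c : ℚ))) •
      (Ring.inverse (-(2 * u)) *
        ∑ᶠ (p : DiskSpec × DiskSpec) (_ : IsSplitting δ p.1 p.2),
          ∑ q ∈ Finset.HasAntidiagonal.antidiagonal (c - 1),
            ((p.1.dp : R) - (p.1.dm : R)) * ((p.2.dp : R) - (p.2.dm : R)) *
              P q.1 p.1 * P q.2 p.2))

/-!
Every splitting of `δ` lowers the total degree `d⁺ + d⁻`, so the recursion (ii) computes
`P (c, δ)` for `c ≥ 1` from values at specifications of smaller total degree. Induction on `c`
shows that any family satisfying (ii) has `P (c, δ) = 0` once `1 ≤ c` and `d⁺ + d⁻ ≤ c`,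
so (i) is a finite sum and fixes `P (0, δ)` in terms of the `P (c, δ)` with `c ≥ 1`. The whole
system is therefore a recursion that is well founded on the total degree, and such a recursion
has exactly one solution.
-/

theorem existsUnique_eq_of_wellFounded {α β : Type*} [Nonempty β] {r : α → α → Prop}
    (hr : WellFounded r) (Φ : (α → β) → α → β)
    (hΦ : ∀ f g a, (∀ b, r b a → f b = g b) → Φ f a = Φ g a) :
    ∃! f : α → β, ∀ a, f a = Φ f a := by
  classical
  refine ⟨hr.fix fun a rec => Φ (fun b => if h : r b a then rec b h else Classical.arbitrary β) a,
    fun a => ?_, fun g hg => ?_⟩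
  · rw [hr.fix_eq]
    exact hΦ _ _ a fun b hb => dif_pos hb
  · funext a
    induction a using hr.induction with
    | _ a ih =>
      rw [hg a, hr.fix_eq]
      exact hΦ _ _ a fun b hb => by rw [dif_pos hb]; exact ih b hb

def DiskSpec.totalDegree (δ : DiskSpec) : ℕ := δ.dp + δ.dm

namespace IsSplitting

variable {δ δ₁ δ₂ : DiskSpec}

lemma totalDegree_add (h : IsSplitting δ δ₁ δ₂) :
    δ₁.totalDegree + δ₂.totalDegree = δ.totalDegree := by
  obtain ⟨-, -, hp, hm, -, -⟩ := h
  simp only [DiskSpec.totalDegree]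
  omega

lemma totalDegree_left_pos (h : IsSplitting δ δ₁ δ₂) : 0 < δ₁.totalDegree := by
  obtain ⟨-, -, -, -, h₁, -⟩ := h
  simp only [DiskSpec.totalDegree]
  omega

lemma totalDegree_right_pos (h : IsSplitting δ δ₁ δ₂) : 0 < δ₂.totalDegree := by
  obtain ⟨-, -, -, -, -, h₂⟩ := h
  simp only [DiskSpec.totalDegree]
  omega

end IsSplitting

section CornerRecursion

variable {R : Type*} [CommRing R] [Algebra ℚ R] (u : R)

noncomputable def cornerTerm (P : ℕ → DiskSpec → R) (c : ℕ) (δ : DiskSpec) : R :=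
  ((1 : ℚ) / 2 * (1 / (c : ℚ))) •
    (Ring.inverse (-(2 * u)) *
      ∑ᶠ (p : DiskSpec × DiskSpec) (_ : IsSplitting δ p.1 p.2),
        ∑ q ∈ Finset.HasAntidiagonal.antidiagonal (c - 1),
          ((p.1.dp : R) - (p.1.dm : R)) * ((p.2.dp : R) - (p.2.dm : R)) *
            P q.1 p.1 * P q.2 p.2)

variable {u}

lemma cornerTerm_congr {P Q : ℕ → DiskSpec → R} {c : ℕ} {δ : DiskSpec}
    (h : ∀ δ', δ'.totalDegree < δ.totalDegree → ∀ c', P c' δ' = Q c' δ') :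
    cornerTerm u P c δ = cornerTerm u Q c δ := by
  unfold cornerTerm
  congr 2
  refine finsum_congr fun p => finsum_congr fun hp => Finset.sum_congr rfl fun q _ => ?_
  have := hp.totalDegree_add
  have := hp.totalDegree_left_pos
  have := hp.totalDegree_right_pos
  rw [h p.1 (by omega), h p.2 (by omega)]

lemma cornerTerm_eq_zero {P : ℕ → DiskSpec → R} {c : ℕ} {δ : DiskSpec}
    (h : ∀ δ₁ δ₂, IsSplitting δ δ₁ δ₂ → ∀ c₁ c₂, c₁ + c₂ = c - 1 → P c₁ δ₁ = 0 ∨ P c₂ δ₂ = 0) :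
    cornerTerm u P c δ = 0 := by
  rw [cornerTerm, finsum_eq_zero_of_forall_eq_zero fun p =>
    (finsum_congr fun hp => Finset.sum_eq_zero fun q hq => ?_).trans finsum_zero,
    mul_zero, smul_zero]
  rcases h p.1 p.2 hp q.1 q.2 (Finset.HasAntidiagonal.mem_antidiagonal.mp hq) with h0 | h0 <;>
    simp [h0]

lemma eq_zero_of_totalDegree_le {P : ℕ → DiskSpec → R}
    (hP : ∀ δ c, 1 ≤ c → P c δ = cornerTerm u P c δ) {c : ℕ} {δ : DiskSpec}
    (hc : 1 ≤ c) (hδ : δ.totalDegree ≤ c) : P c δ = 0 := by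
  induction c using Nat.strong_induction_on generalizing δ with
  | _ c ih =>
    rw [hP δ c hc]
    refine cornerTerm_eq_zero fun δ₁ δ₂ hs c₁ c₂ hq => ?_
    have := hs.totalDegree_add
    have := hs.totalDegree_left_pos
    have := hs.totalDegree_right_pos
    -- `c₁ + c₂ + 1 = c ≥ δ₁.totalDegree + δ₂.totalDegree`, so some `cᵢ ≥ δᵢ.totalDegree`
    by_cases h₁ : δ₁.totalDegree ≤ c₁
    · exact .inl (ih c₁ (by omega) (by omega) h₁)
    · exact .inr (ih c₂ (by omega) (by omega) (by omega))

lemma finsum_alternating_eq {P : ℕ → DiskSpec → R}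
    (hP : ∀ δ c, 1 ≤ c → P c δ = cornerTerm u P c δ) (δ : DiskSpec) :
    ∑ᶠ c : ℕ, (-1 : R) ^ c * P c δ =
      P 0 δ + ∑ c ∈ Finset.range δ.totalDegree, (-1 : R) ^ (c + 1) * cornerTerm u P (c + 1) δ := by
  have hsupp : {c | P c δ ≠ 0} ⊆ Finset.range (δ.totalDegree + 1) := fun c hc => by
    by_contra h
    simp only [Finset.coe_range, Set.mem_Iio, not_lt] at h
    exact hc (eq_zero_of_totalDegree_le hP (by omega) (by omega))
  rw [finsum_eq_sum_of_support_subset _ ((Function.support_mul_subset_right _ _).trans hsupp),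
    Finset.sum_range_succ', add_comm]
  simp only [pow_zero, one_mul]
  exact congrArg _ (Finset.sum_congr rfl fun c _ => by rw [hP δ (c + 1) (by omega)])

variable (u)

/-- Equation (i) solved for `P 0 δ`, with the alternating sum cut off at `d⁺ + d⁻` as
`finsum_alternating_eq` justifies. -/
noncomputable def cornerStep (G : DiskSpec → R) (P : ℕ → DiskSpec → R) (c : ℕ) (δ : DiskSpec) :
    R :=
  if c = 0 then
    G δ - ∑ k ∈ Finset.range δ.totalDegree, (-1 : R) ^ (k + 1) * cornerTerm u P (k + 1) δ
  else cornerTerm u P c δ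

variable {u}

lemma cornerStep_congr {G : DiskSpec → R} {P Q : ℕ → DiskSpec → R} {c : ℕ} {δ : DiskSpec}
    (h : ∀ δ', δ'.totalDegree < δ.totalDegree → ∀ c', P c' δ' = Q c' δ') :
    cornerStep u G P c δ = cornerStep u G Q c δ := by
  simp only [cornerStep, cornerTerm_congr h]

lemma isCornerSolution_iff {G : DiskSpec → R} {P : ℕ → DiskSpec → R} :
    IsCornerSolution u G P ↔ ∀ c δ, P c δ = cornerStep u G P c δ := by
  constructor
  · rintro ⟨-, hsum, hrec⟩ c δ
    rcases c with _ | c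
    · rw [cornerStep, if_pos rfl, ← hsum δ, finsum_alternating_eq hrec]
      ring
    · rw [cornerStep, if_neg c.succ_ne_zero]
      exact hrec δ _ c.succ_pos
  · intro h
    have hrec : ∀ δ c, 1 ≤ c → P c δ = cornerTerm u P c δ := fun δ c hc => by
      rw [h, cornerStep, if_neg (by omega)]
    refine ⟨fun δ => (Set.finite_Iic δ.totalDegree).subset fun c hc => ?_,
      fun δ => ?_, hrec⟩
    · by_contra hlt
      simp only [Set.mem_Iic, not_le] at hlt
      exact hc (eq_zero_of_totalDegree_le hrec (by omega) hlt.le)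
    · rw [finsum_alternating_eq hrec, h 0 δ, cornerStep, if_pos rfl]
      ring

end CornerRecursion

theorem stmt3_general {R : Type*} [CommRing R] [Algebra ℚ R] (u : R)
    (G : DiskSpec → R) :
    ∃! P : ℕ → DiskSpec → R, IsCornerSolution u G P := by
  simp only [isCornerSolution_iff]
  have hfix := existsUnique_eq_of_wellFounded (wellFounded_lt.onFun (f := DiskSpec.totalDegree))
    (fun (Q : DiskSpec → ℕ → R) δ c => cornerStep u G (fun c δ => Q δ c) c δ)
    fun Q Q' δ h => funext fun c => cornerStep_congr fun δ' hδ' c' => congrFun (h δ' hδ') c'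
  -- the recursion is well founded in `δ`, so solve for `δ ↦ P (·) δ` and transpose back
  refine ((Equiv.piComm fun (_ : ℕ) (_ : DiskSpec) => R).existsUnique_congr fun P => ?_).mpr hfix
  exact ⟨fun h δ => funext (h · δ), fun h c δ => congrFun (h δ) c⟩

/-- Existence and uniqueness of the solution to the corner-recursion system. -/
theorem stmt3 {R : Type*} [CommRing R] [Algebra ℚ R] (u : R) (hu : IsUnit u)
    (G : DiskSpec → R) :
    ∃! P : ℕ → DiskSpec → R, IsCornerSolution u G P :=
  stmt3_general u G
end

section
/- For every integer n ≥ 3 and every index i with 2 ≤ i ≤ n−1, substituting a_i = 0 into L_n gives the factorization L_n(a_1,…,a_{i−1},0,a_{i+1},…,a_n) = (1 + ∑_{j≠i} a_j) · L_{n−1}(a_1,…,a_{i−1},a_{i+1},…,a_n), where on the right-hand side L_{n−1} is formed on the n−1 remaining variables, with a_1 playing the role of the first variable and a_n the role of the last variable. -/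
/-!
Split the subsets `I ∋ 1`, `I ∌ n` according to whether `i ∈ I`: both `I` and `I ∪ {i}` come
from the same subset `I'` of the remaining `n - 1` indices. Since `a_i = 0`, both have the same
`a_I` and `a_J` as `I'`, and their two terms add up to `(1 + a_I + a_J)` times the term of `I'`
in `L_{n-1}`, where `a_I + a_J = ∑_{j ≠ i} a_j`.
-/

/-- The polynomial `L_{n+2}(a_1,…,a_{n+2}) = ∑_{(I,J)} t(I,J)`, the sum over pairs
`(I,J)` of disjoint sets with union `{1,…,n+2}`, `1 ∈ I`, `n+2 ∈ J`, where
`t(I,J) = a_1 a_I^{|I|−2} (1+a_J)^{|J|−1}` for `|I| ≥ 2` and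
`t({1},J) = (1+a_J)^{n}` (the case `|I| = 1`). -/
def Lpoly (R : Type*) [CommRing R] (n : ℕ) (a : Fin (n + 2) → R) : R :=
  ∑ I ∈ Finset.univ.filter
      (fun I : Finset (Fin (n + 2)) => 0 ∈ I ∧ Fin.last (n + 1) ∉ I),
    if I.card = 1 then (1 + ∑ j ∈ Iᶜ, a j) ^ n
    else a 0 * (∑ i ∈ I, a i) ^ (I.card - 2) * (1 + ∑ j ∈ Iᶜ, a j) ^ (Iᶜ.card - 1)

open Finset Function

namespace Fin

variable {m : ℕ} (i : Fin (m + 1))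

theorem sum_finset_univ_succAbove {M : Type*} [AddCommMonoid M] (f : Finset (Fin (m + 1)) → M) :
    ∑ s, f s =
      ∑ s : Finset (Fin m), (f (s.map i.succAboveEmb) + f (insert i (s.map i.succAboveEmb))) := by
  have hinj :=
    (image_injective i.succAboveEmb.injective).injOn (s := ↑(univ : Finset (Fin m)).powerset)
  rw [← powerset_univ, univ_succAbove m i, cons_eq_insert, sum_powerset_insert (by simp),
    map_eq_image, powerset_image, sum_image hinj, sum_image hinj, powerset_univ,
    ← sum_add_distrib]
  simp only [map_eq_image]


theorem compl_map_succAboveEmb (s : Finset (Fin m)) :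
    (s.map i.succAboveEmb)ᶜ = insert i (sᶜ.map i.succAboveEmb) := by
  ext x
  rcases eq_or_ne x i with rfl | hx
  · simp
  · obtain ⟨k, rfl⟩ := exists_succAbove_eq hx
    simp [hx]

theorem compl_insert_map_succAboveEmb (s : Finset (Fin m)) :
    (insert i (s.map i.succAboveEmb))ᶜ = sᶜ.map i.succAboveEmb := by
  rw [compl_insert, compl_map_succAboveEmb, erase_insert (by simp)]

theorem sum_univ_erase_eq_sum_succAbove {M : Type*} [AddCommMonoid M] (a : Fin (m + 1) → M) :
    ∑ j ∈ univ.erase i, a j = ∑ j, a (i.succAbove j) := by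
  rw [univ_succAbove m i, cons_eq_insert, erase_insert (by simp), sum_map, coe_succAboveEmb]

variable {M : Type*} [AddCommMonoid M] (a : Fin (m + 1) → M) (s : Finset (Fin m))

theorem sum_map_succAboveEmb_update_zero :
    ∑ j ∈ s.map i.succAboveEmb, update a i 0 j = ∑ j ∈ s, a (i.succAbove j) := by
  simp [sum_map]

theorem sum_insert_map_succAboveEmb_update_zero :
    ∑ j ∈ insert i (s.map i.succAboveEmb), update a i 0 j = ∑ j ∈ s, a (i.succAbove j) := by
  rw [sum_insert (by simp), update_self, zero_add, sum_map_succAboveEmb_update_zero]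

end Fin

section Lpoly

variable {R : Type*} [CommRing R]

/-- The term `t(I,J)` of `L_{N+2}`, as a function of `k = |I|`, `c = |J|`, `a₀ = a_1`,
`s = a_I` and `t = a_J`. -/
def Lterm (N k c : ℕ) (a₀ s t : R) : R :=
  if k = 1 then (1 + t) ^ N else a₀ * s ^ (k - 2) * (1 + t) ^ (c - 1)

theorem Lterm_succ_add_Lterm {n k c : ℕ} {a₀ s t : R} (hk : 1 ≤ k) (hc : 1 ≤ c)
    (hkc : k + c = n + 2) (hs : k = 1 → s = a₀) :
    Lterm (n + 1) (k + 1) c a₀ s t + Lterm (n + 1) k (c + 1) a₀ s t =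
      (1 + (s + t)) * Lterm n k c a₀ s t := by
  obtain rfl | hk2 := hk.eq_or_lt
  · obtain rfl : c = n + 1 := by omega
    simp only [Lterm, Nat.reduceAdd, OfNat.ofNat_ne_one, ↓reduceIte, hs rfl, tsub_self, pow_zero,
      mul_one, add_tsub_cancel_right]
    ring
  · obtain ⟨k, rfl⟩ : ∃ j, k = j + 2 := ⟨k - 2, by omega⟩
    obtain ⟨c, rfl⟩ : ∃ d, c = d + 1 := ⟨c - 1, by omega⟩
    simp only [Lterm, Nat.add_eq_right, Nat.add_eq_zero_iff, OfNat.ofNat_ne_zero, and_false,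
      ↓reduceIte, Nat.reduceSubDiff, add_tsub_cancel_right, Nat.reduceEqDiff]
    ring

def Lsummand (n : ℕ) (a : Fin (n + 2) → R) (I : Finset (Fin (n + 2))) : R :=
  if 0 ∈ I ∧ Fin.last (n + 1) ∉ I then
    Lterm n I.card Iᶜ.card (a 0) (∑ j ∈ I, a j) (∑ j ∈ Iᶜ, a j)
  else 0

theorem Lpoly_eq_sum_Lsummand (n : ℕ) (a : Fin (n + 2) → R) :
    Lpoly R n a = ∑ I, Lsummand n a I :=
  sum_filter _ _

theorem Lsummand_map_add_Lsummand_insert_map {n : ℕ} (a : Fin (n + 3) → R) {i : Fin (n + 3)}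
    (hi0 : i ≠ 0) (hilast : i ≠ Fin.last (n + 2)) (I : Finset (Fin (n + 2))) :
    Lsummand (n + 1) (update a i 0) (I.map i.succAboveEmb) +
        Lsummand (n + 1) (update a i 0) (insert i (I.map i.succAboveEmb)) =
      (1 + ∑ j ∈ univ.erase i, a j) * Lsummand n (a ∘ i.succAbove) I := by
  have h0 : (0 : Fin (n + 3)) = i.succAbove 0 := (Fin.succAbove_ne_zero_zero hi0).symm
  have hlast : Fin.last (n + 2) = i.succAbove (Fin.last (n + 1)) :=
    (Fin.succAbove_ne_last_last hilast).symm
  have hmem (j : Fin (n + 2)) : i.succAbove j ∈ I.map i.succAboveEmb ↔ j ∈ I :=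
    mem_map' i.succAboveEmb
  have hmem_insert (j : Fin (n + 2)) :
      i.succAbove j ∈ insert i (I.map i.succAboveEmb) ↔ j ∈ I := by
    rw [mem_insert, hmem, or_iff_right (Fin.succAbove_ne i j)]
  by_cases hI : 0 ∈ I ∧ Fin.last (n + 1) ∉ I
  · obtain ⟨hI0, hIlast⟩ := hI
    have hk : 1 ≤ #I := card_pos.mpr ⟨0, hI0⟩
    have hc : 1 ≤ #Iᶜ := card_pos.mpr ⟨_, mem_compl.mpr hIlast⟩
    have hkc : #I + #Iᶜ = n + 2 := by rw [card_add_card_compl, Fintype.card_fin]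
    have hs : #I = 1 → ∑ j ∈ I, a (i.succAbove j) = a (i.succAbove 0) := fun h1 ↦ by
      obtain ⟨x, rfl⟩ := card_eq_one.mp h1
      rw [mem_singleton.mp hI0, sum_singleton]
    simp only [Lsummand, h0, hlast, hmem, hmem_insert, hI0, hIlast, not_false_eq_true, and_self,
      if_true, comp_apply]
    rw [Fin.compl_map_succAboveEmb, Fin.compl_insert_map_succAboveEmb,
      card_insert_of_notMem (by simp), card_insert_of_notMem (by simp), card_map, card_map,
      Fin.sum_insert_map_succAboveEmb_update_zero, Fin.sum_insert_map_succAboveEmb_update_zero,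
      Fin.sum_map_succAboveEmb_update_zero, Fin.sum_map_succAboveEmb_update_zero,
      update_of_ne (Fin.succAbove_ne i 0), Fin.sum_univ_erase_eq_sum_succAbove,
      ← sum_add_sum_compl I, add_comm]
    exact Lterm_succ_add_Lterm hk hc hkc hs
  · simp only [Lsummand, h0, hlast, hmem, hmem_insert, if_neg hI, add_zero, mul_zero]

end Lpoly

/-- There are `n + 3` variables, indexed from `0`, so `i` ranges over the interior indices. -/
theorem stmt6 {R : Type*} [CommRing R] (n : ℕ) (a : Fin (n + 3) → R)
    (i : Fin (n + 3)) (h1 : 1 ≤ i.1) (h2 : i.1 ≤ n + 1) :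
    Lpoly R (n + 1) (Function.update a i 0) =
      (1 + ∑ j ∈ Finset.univ.erase i, a j) * Lpoly R n (a ∘ i.succAbove) := by
  have hi0 : i ≠ 0 := by rintro rfl; simp at h1
  have hilast : i ≠ Fin.last (n + 2) := by rintro rfl; simp at h2
  rw [Lpoly_eq_sum_Lsummand, Lpoly_eq_sum_Lsummand, mul_sum, Fin.sum_finset_univ_succAbove i]
  exact sum_congr rfl fun I _ ↦ Lsummand_map_add_Lsummand_insert_map a hi0 hilast I
end

section
/- For every integer n ≥ 2, the coefficient of the monomial a_2·a_3⋯a_{n−1} in the polynomial L_n(a_1,…,a_n) ∈ ℤ[a_1,…,a_n] equals (n−2)!. -/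
open MvPolynomial Finset

variable {σ : Type*} [DecidableEq σ]

lemma mT_apply (T : Finset σ) (j : σ) :
    (∑ i ∈ T, Finsupp.single i (1 : ℕ)) j = if j ∈ T then 1 else 0 := by
  rw [Finset.sum_apply']
  simp [Finsupp.single_apply]

lemma mT_support (T : Finset σ) : (∑ i ∈ T, Finsupp.single i (1 : ℕ)).support = T := by
  ext j
  simp only [Finsupp.mem_support_iff, mT_apply]
  split <;> simp_all

lemma mT_sub (T : Finset σ) {j : σ} (hj : j ∈ T) :
    (∑ i ∈ T, Finsupp.single i (1 : ℕ)) - Finsupp.single j 1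
      = ∑ i ∈ T.erase j, Finsupp.single i (1 : ℕ) := by
  rw [← Finset.add_sum_erase T _ hj, add_tsub_cancel_left]

lemma key (n : ℕ) (S T : Finset σ) (hT : T ⊆ S) (hc : T.card = n) :
    MvPolynomial.coeff (∑ j ∈ T, Finsupp.single j 1)
      ((1 + ∑ j ∈ S, MvPolynomial.X j) ^ n : MvPolynomial σ ℤ) = n.factorial := by
  induction n generalizing T with
  | zero =>
    rw [Finset.card_eq_zero] at hc
    subst hc
    simp
  | succ n ih =>
    rw [pow_succ, mul_add, mul_one, coeff_add, Finset.mul_sum, coeff_sum]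
    have h0 : MvPolynomial.coeff (∑ j ∈ T, Finsupp.single j 1)
        ((1 + ∑ j ∈ S, MvPolynomial.X j) ^ n : MvPolynomial σ ℤ) = 0 := by
      apply coeff_eq_zero_of_totalDegree_lt
      calc ((1 + ∑ j ∈ S, MvPolynomial.X j) ^ n : MvPolynomial σ ℤ).totalDegree
          ≤ n * (1 + ∑ j ∈ S, MvPolynomial.X j : MvPolynomial σ ℤ).totalDegree :=
            totalDegree_pow _ _
        _ ≤ n * 1 := by
            gcongr
            apply le_trans (totalDegree_add _ _)
            simp only [totalDegree_one, max_le_iff]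
            constructor
            · omega
            · exact le_trans (totalDegree_finset_sum _ _) (by
                apply Finset.sup_le; intro j _; simp [totalDegree_X])
        _ < n + 1 := by omega
        _ = ∑ i ∈ (∑ j ∈ T, Finsupp.single j (1:ℕ)).support,
              (∑ j ∈ T, Finsupp.single j (1:ℕ)) i := by
            rw [mT_support]
            rw [Finset.sum_congr rfl (fun i hi => by rw [mT_apply, if_pos hi])]
            simp [hc]
    rw [h0, zero_add]
    have hsum : ∀ j ∈ S, MvPolynomial.coeff (∑ i ∈ T, Finsupp.single i 1)
        (((1 + ∑ i ∈ S, MvPolynomial.X i) ^ n * MvPolynomial.X j : MvPolynomial σ ℤ))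
        = if j ∈ T then (n.factorial : ℤ) else 0 := by
      intro j _
      rw [coeff_mul_X', mT_support]
      split
      · rename_i hjT
        rw [mT_sub T hjT]
        rw [ih (T.erase j) (fun x hx => hT (Finset.mem_of_mem_erase hx))
          (by rw [Finset.card_erase_of_mem hjT, hc]; rfl)]
      · rfl
    rw [Finset.sum_congr rfl hsum, ← Finset.sum_filter,
      Finset.filter_mem_eq_inter, Finset.inter_eq_right.mpr hT]
    simp [Finset.sum_const, hc, Nat.factorial_succ]

/-- The coefficient of the monomial `a_2 a_3 ⋯ a_{n−1}` (the product of all interior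
variables) in `L_n ∈ ℤ[a_1,…,a_n]` equals `(n−2)!`.  Here the total number of variables
is `n + 2`, the interior indices are `1 ≤ j ≤ n` (`0`-indexed), and `(n+2−2)! = n!`. -/
theorem stmt7 (n : ℕ) :
    MvPolynomial.coeff
        (∑ j ∈ Finset.univ.filter (fun j : Fin (n + 2) => 1 ≤ j.1 ∧ j.1 ≤ n),
          Finsupp.single j 1)
        (Lpoly (MvPolynomial (Fin (n + 2)) ℤ) n MvPolynomial.X) =
      (n.factorial : ℤ) := by
  classical
  set T : Finset (Fin (n+2)) := Finset.univ.filter (fun j : Fin (n + 2) => 1 ≤ j.1 ∧ j.1 ≤ n) with hTdef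
  set m : Fin (n+2) →₀ ℕ := ∑ j ∈ T, Finsupp.single j 1 with hmdef
  rw [Lpoly, coeff_sum]
  have hTcard : T.card = n := by
    have : T = Finset.Icc (⟨1, by omega⟩ : Fin (n+2)) ⟨n, by omega⟩ := by
      ext j
      simp [hTdef, Finset.mem_Icc, Fin.le_def]
    rw [this, Fin.card_Icc]
    simp
  have hm0 : (0 : Fin (n+2)) ∉ m.support := by
    rw [hmdef, mT_support, hTdef]
    simp
  have hmain : ∀ I ∈ Finset.univ.filter
      (fun I : Finset (Fin (n + 2)) => 0 ∈ I ∧ Fin.last (n + 1) ∉ I),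
      MvPolynomial.coeff m
        (if I.card = 1 then (1 + ∑ j ∈ Iᶜ, (X j : MvPolynomial (Fin (n+2)) ℤ)) ^ n
          else X 0 * (∑ i ∈ I, X i) ^ (I.card - 2) * (1 + ∑ j ∈ Iᶜ, X j) ^ (Iᶜ.card - 1))
        = if I = {0} then (n.factorial : ℤ) else 0 := by
    intro I hI
    simp only [Finset.mem_filter] at hI
    obtain ⟨-, h0I, hlast⟩ := hI
    by_cases hc : I.card = 1
    · have hI0 : I = {0} := by
        obtain ⟨a, ha⟩ := Finset.card_eq_one.mp hc
        subst ha
        simp only [Finset.mem_singleton] at h0I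
        rw [h0I]
      subst hI0
      rw [if_pos hc, hmdef]
      apply key n ({0}ᶜ : Finset (Fin (n+2))) T _ hTcard
      intro j hj
      simp only [hTdef, Finset.mem_filter] at hj
      simp only [Finset.mem_compl, Finset.mem_singleton]
      intro h
      subst h
      simp at hj
    · rw [if_neg hc]
      have hI0 : ¬ I = {0} := by
        intro h; subst h; simp at hc
      rw [if_neg hI0]
      rw [mul_assoc, mul_comm, coeff_mul_X']
      rw [if_neg hm0]
  rw [Finset.sum_congr rfl hmain, ← Finset.sum_filter]
  have : Finset.filter (fun I => I = {0})
      (Finset.univ.filter (fun I : Finset (Fin (n + 2)) => 0 ∈ I ∧ Fin.last (n + 1) ∉ I))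
      = {({0} : Finset (Fin (n+2)))} := by
    ext I
    simp only [Finset.mem_filter, Finset.mem_singleton, Finset.mem_univ, true_and]
    constructor
    · rintro ⟨-, h⟩; exact h
    · rintro rfl
      refine ⟨⟨Finset.mem_singleton_self 0, ?_⟩, rfl⟩
      simp only [Finset.mem_singleton]
      intro h
      have := congrArg Fin.val h
      simp [Fin.last] at this
  rw [this]
  simp
end

section
/- Let R be a commutative ring, σ a finite index set, S ⊆ σ, and P a polynomial in the variables {X_i : i ∈ σ} over R whose total degree is at most |S|. If for every i ∈ S the polynomial obtained from P by substituting X_i := 0 is the zero polynomial, and moreover the coefficient in P of the monomial ∏_{i∈S} X_i is zero, then P = 0. -/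
open MvPolynomial

lemma aux_coeff_subst {R : Type*} [CommRing R] {σ : Type*} [DecidableEq σ]
    (i : σ) (d : σ →₀ ℕ) (hd : d i = 0) (P : MvPolynomial σ R) :
    MvPolynomial.coeff d
      (MvPolynomial.aeval
        (fun j : σ => if j = i then (0 : MvPolynomial σ R) else MvPolynomial.X j) P)
      = MvPolynomial.coeff d P := by
  classical
  set f : σ → MvPolynomial σ R := fun j => if j = i then 0 else MvPolynomial.X j with hf
  have key : ∀ (m : σ →₀ ℕ) (c : R),
      aeval f (monomial m c) = if m i = 0 then monomial m c else 0 := by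
    intro m c
    rw [aeval_monomial]
    by_cases h : m i = 0
    · rw [if_pos h]
      have hp : (m.prod fun n e => f n ^ e) = m.prod fun n e => (X n : MvPolynomial σ R) ^ e := by
        refine Finset.prod_congr rfl fun j hj => ?_
        have hji : j ≠ i := fun he => by simp [he, h] at hj
        simp [hf, hji]
      rw [hp]
      simp [monomial_eq, algebraMap_eq]
    · rw [if_neg h]
      have hp : (m.prod fun n e => f n ^ e) = 0 := by
        refine Finset.prod_eq_zero (Finsupp.mem_support_iff.2 h) ?_
        simp [hf, zero_pow h]
      rw [hp, mul_zero]
  conv_lhs => rw [P.as_sum, map_sum]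
  rw [coeff_sum]
  simp only [key]
  have hterm : ∀ m ∈ P.support,
      coeff d (if m i = 0 then monomial m (coeff m P) else 0) = if m = d then coeff m P else 0 := by
    intro m _
    by_cases h : m i = 0
    · simp [h, coeff_monomial]
    · have hmd : m ≠ d := fun he => h (he ▸ hd)
      simp [h, hmd]
  rw [Finset.sum_congr rfl hterm, Finset.sum_ite_eq' P.support d (fun m => coeff m P)]
  by_cases hdp : d ∈ P.support
  · rw [if_pos hdp]
  · rw [if_neg hdp]; exact (notMem_support_iff.1 hdp).symm

/-- Interpolation principle: if a multivariate polynomial `P` over a commutative ring,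
in variables indexed by a finite set, has total degree at most `|S|`, vanishes under
each substitution `X_i := 0` for `i ∈ S`, and the coefficient of the monomial
`∏_{i ∈ S} X_i` in `P` is zero, then `P = 0`. -/
theorem stmt8 {R : Type*} [CommRing R] {σ : Type*} [Fintype σ] [DecidableEq σ]
    (S : Finset σ) (P : MvPolynomial σ R)
    (hdeg : P.totalDegree ≤ S.card)
    (hzero : ∀ i ∈ S,
      MvPolynomial.aeval
        (fun j : σ => if j = i then (0 : MvPolynomial σ R) else MvPolynomial.X j) P = 0)
    (hcoeff : MvPolynomial.coeff (∑ i ∈ S, Finsupp.single i 1) P = 0) :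
    P = 0 := by
  ext d
  rw [coeff_zero]
  by_cases hs : ∃ i ∈ S, d i = 0
  · obtain ⟨i, hiS, hdi⟩ := hs
    rw [← aux_coeff_subst i d hdi P, hzero i hiS, coeff_zero]
  · push_neg at hs
    by_contra hne
    set e : σ →₀ ℕ := ∑ i ∈ S, Finsupp.single i 1 with he
    have heval : ∀ j, e j = if j ∈ S then 1 else 0 := by
      intro j
      rw [he, Finset.sum_apply']
      by_cases hj : j ∈ S
      · rw [Finset.sum_eq_single j (fun b _ hb => by simp [Finsupp.single_apply, hb])
          (fun h => absurd hj h)]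
        simp [hj]
      · rw [if_neg hj, Finset.sum_eq_zero]
        intro b hb
        have : b ≠ j := fun h => hj (h ▸ hb)
        simp [Finsupp.single_apply, this]
    have hle : ∀ j, e j ≤ d j := by
      intro j
      rw [heval]
      by_cases hj : j ∈ S
      · rw [if_pos hj]; exact Nat.one_le_iff_ne_zero.2 (hs j hj)
      · simp [hj]
    have hesum : ∑ j : σ, e j = S.card := by
      simp only [heval]
      rw [Finset.sum_ite_mem, Finset.univ_inter, Finset.sum_const, smul_eq_mul, mul_one]
    have hdsum : ∑ j : σ, d j ≤ S.card := by
      calc ∑ j : σ, d j = d.sum fun _ n => n := (Finsupp.sum_fintype d (fun _ n => n) fun _ => rfl).symm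
        _ ≤ P.totalDegree := MvPolynomial.le_totalDegree (MvPolynomial.mem_support_iff.2 hne)
        _ ≤ S.card := hdeg
    have hsumeq : ∑ j : σ, e j = ∑ j : σ, d j :=
      le_antisymm (Finset.sum_le_sum fun j _ => hle j) (hesum ▸ hdsum)
    have hde : d = e := by
      ext j
      exact ((Finset.sum_eq_sum_iff_of_le fun j _ => hle j).1 hsumeq j (Finset.mem_univ j)).symm
    exact hne (hde ▸ hcoeff)
end
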